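/- arXiv:math/0601021 — 10 statements merged into one kernel-verified Lean document; each statement's English description precedes it below -/
import Mathlib

section
/- Let d ≥ 1 and let S ⊂ ℤ^d be a finite set with 0 ∉ S and −S = S. Let f(x) = Σ_{λ∈S} c(λ)·exp(2πi⟨x,λ⟩) (with complex coefficients c : S → ℂ) be real-valued for every x ∈ ℝ^d. Then for every y ∈ ℝ^d there exists a point x in the closed Euclidean ball of radius D(S)/2 centered at y with f(x) = 0, where D(S) = Σ_{λ∈S} 1/(4·‖λ‖₂). -/
/-!
Induction on the spectrum. For `μ ∈ S` let `w = μ / (4‖μ‖²)`, so that `⟪w, ±μ⟫ = ±1/4`. Then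
`g x = f (x - w) + f (x + w)` is a real trigonometric polynomial whose coefficients are those of `f`
multiplied by `2 cos (2π⟪w, λ⟫)`, which vanishes at `λ = ±μ`; so `g` has spectrum `S \ {μ, -μ}` and,
by induction, a zero `x₀` within `D(S \ {μ, -μ}) / 2` of `y`. Since `f (x₀ - w) = -f (x₀ + w)`, the
intermediate value theorem gives a zero of `f` on the segment `[x₀ - w, x₀ + w]`, hence within
`‖w‖ = 1 / (4‖μ‖)` of `x₀`, and the two frequencies `±μ` contribute exactly `2‖w‖` to `D(S)`.
-/

open Complex Finset Metric
open scoped Real RealInnerProductSpace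

section Segment

variable {E : Type*} [AddCommGroup E] [Module ℝ E] [TopologicalSpace E] [IsTopologicalAddGroup E]
  [ContinuousSMul ℝ E]

theorem exists_mem_segment_eq_zero_of_add_eq_zero {f : E → ℝ} {a b : E}
    (hf : ContinuousOn f (segment ℝ a b)) (hab : f a + f b = 0) :
    ∃ z ∈ segment ℝ a b, f z = 0 := by
  have hs := (convex_segment a b).isPreconnected
  rcases le_total (f a) 0 with ha | ha
  · exact hs.intermediate_value₂ (left_mem_segment ℝ a b) (right_mem_segment ℝ a b) hf
      continuousOn_const ha (by linarith)
  · obtain ⟨z, hz, h⟩ := hs.intermediate_value₂ (left_mem_segment ℝ a b)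
      (right_mem_segment ℝ a b) continuousOn_const hf ha (by linarith)
    exact ⟨z, hz, h.symm⟩

end Segment

theorem segment_sub_add_subset_closedBall {E : Type*} [SeminormedAddCommGroup E] [NormedSpace ℝ E]
    (x w : E) : segment ℝ (x - w) (x + w) ⊆ closedBall x ‖w‖ :=
  (convex_closedBall x ‖w‖).segment_subset (by simp) (by simp)

section Quarter

variable {E : Type*} [NormedAddCommGroup E] [InnerProductSpace ℝ E] {ξ : E}

theorem inner_inv_four_norm_sq_smul_self (hξ : ξ ≠ 0) :
    ⟪(4 * ‖ξ‖ ^ 2)⁻¹ • ξ, ξ⟫ = 1 / 4 := by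
  have := norm_ne_zero_iff.2 hξ
  rw [real_inner_smul_left, real_inner_self_eq_norm_sq]
  field_simp

theorem norm_inv_four_norm_sq_smul_self (hξ : ξ ≠ 0) :
    ‖(4 * ‖ξ‖ ^ 2)⁻¹ • ξ‖ = 1 / (4 * ‖ξ‖) := by
  have := norm_ne_zero_iff.2 hξ
  rw [norm_smul, norm_inv, norm_mul, norm_pow, norm_norm, Real.norm_ofNat]
  field_simp

theorem cos_two_pi_inner_inv_four_norm_sq_smul_self (hξ : ξ ≠ 0) :
    Complex.cos (2 * π * ⟪(4 * ‖ξ‖ ^ 2)⁻¹ • ξ, ξ⟫) = 0 := by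
  rw [inner_inv_four_norm_sq_smul_self hξ, Complex.cos_eq_zero_iff]
  exact ⟨0, by push_cast; ring⟩

end Quarter

section TrigPoly

variable {Λ E : Type*} [AddCommGroup Λ] [NormedAddCommGroup E] [InnerProductSpace ℝ E]
  (ω : Λ →+ E)

noncomputable def trigPoly (S : Finset Λ) (c : Λ → ℂ) (x : E) : ℂ :=
  ∑ k ∈ S, c k * cexp (2 * π * I * ⟪x, ω k⟫)

noncomputable def spectralDiam (S : Finset Λ) : ℝ :=
  ∑ k ∈ S, 1 / (4 * ‖ω k‖)

variable {ω}

theorem continuous_trigPoly (S : Finset Λ) (c : Λ → ℂ) : Continuous (trigPoly ω S c) := by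
  unfold trigPoly
  fun_prop

theorem trigPoly_eq_of_subset {S T : Finset Λ} {c : Λ → ℂ} (hST : S ⊆ T)
    (hc : ∀ k ∈ T, k ∉ S → c k = 0) : trigPoly ω S c = trigPoly ω T c := by
  ext x
  exact sum_subset hST fun k hkT hkS => by rw [hc k hkT hkS, zero_mul]

theorem trigPoly_sub_add_trigPoly_add (S : Finset Λ) (c : Λ → ℂ) (x w : E) :
    trigPoly ω S c (x - w) + trigPoly ω S c (x + w) =
      trigPoly ω S (fun k => 2 * Complex.cos (2 * π * ⟪w, ω k⟫) * c k) x := by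
  simp only [trigPoly, ← sum_add_distrib]
  refine sum_congr rfl fun k _ => ?_
  set a : ℂ := 2 * π * I * ⟪x, ω k⟫
  set b : ℂ := 2 * π * ⟪w, ω k⟫
  calc c k * cexp (2 * π * I * ⟪x - w, ω k⟫) + c k * cexp (2 * π * I * ⟪x + w, ω k⟫)
      = c k * cexp (a + -b * I) + c k * cexp (a + b * I) := by
        rw [inner_sub_left, inner_add_left]
        simp only [a, b]
        push_cast
        ring_nf
    _ = 2 * Complex.cos b * c k * cexp a := by
        rw [two_cos, Complex.exp_add, Complex.exp_add]
        ring

theorem spectralDiam_eq_sdiff_pair_add [DecidableEq Λ] {S : Finset Λ} {μ : Λ} (hμ : μ ∈ S)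
    (hμ' : -μ ∈ S) (hω : ω μ ≠ 0) :
    spectralDiam ω S = spectralDiam ω (S \ {μ, -μ}) + 2 * (1 / (4 * ‖ω μ‖)) := by
  have hne : μ ≠ -μ := by
    intro h
    have h2 : (2 : ℝ) • ω μ = 0 := by rw [two_smul]; nth_rewrite 2 [h]; simp
    exact hω (by simpa using h2)
  rw [spectralDiam, spectralDiam, ← sum_sdiff (insert_subset hμ (singleton_subset_iff.2 hμ')),
    sum_pair hne, map_neg, norm_neg]
  ring

theorem exists_trigPoly_eq_zero_mem_closedBall (S : Finset Λ) (hS : ∀ k ∈ S, ω k ≠ 0)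
    (hsym : ∀ k ∈ S, -k ∈ S) (c : Λ → ℂ) (hreal : ∀ x, (trigPoly ω S c x).im = 0) (y : E) :
    ∃ x ∈ closedBall y (spectralDiam ω S / 2), trigPoly ω S c x = 0 := by
  classical
  induction S using Finset.strongInduction generalizing c y with
  | H S ih =>
  rcases S.eq_empty_or_nonempty with rfl | ⟨μ, hμ⟩
  · exact ⟨y, by simp [spectralDiam], by simp [trigPoly]⟩
  set w := (4 * ‖ω μ‖ ^ 2)⁻¹ • ω μ
  set S' := S \ {μ, -μ}
  set c' := fun k => 2 * Complex.cos (2 * π * ⟪w, ω k⟫) * c k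
  have hcos := cos_two_pi_inner_inv_four_norm_sq_smul_self (hS μ hμ)
  have hc'μ : c' μ = 0 := by simp only [c', w, hcos, mul_zero, zero_mul]
  have hc'negμ : c' (-μ) = 0 := by
    simp only [c', w, map_neg, inner_neg_right, ofReal_neg, mul_neg, Complex.cos_neg, hcos,
      mul_zero, zero_mul]
  have hg : ∀ x, trigPoly ω S' c' x = trigPoly ω S c (x - w) + trigPoly ω S c (x + w) := by
    intro x
    rw [trigPoly_sub_add_trigPoly_add, trigPoly_eq_of_subset sdiff_subset]
    intro k hkS hk
    obtain h | h : k = μ ∨ k = -μ := by simpa [S', hkS, or_iff_not_imp_left] using hk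
    · rw [h, hc'μ]
    · rw [h, hc'negμ]
  have hS'S : S' ⊂ S := sdiff_ssubset (by simp [insert_subset_iff, hμ, hsym μ hμ]) (by simp)
  have hsym' : ∀ k ∈ S', -k ∈ S' := by
    intro k hk
    simp only [S', mem_sdiff, mem_insert, mem_singleton, neg_eq_iff_eq_neg, neg_neg] at hk ⊢
    exact ⟨hsym k hk.1, by tauto⟩
  obtain ⟨x₀, hx₀, hgx₀⟩ := ih S' hS'S (fun k hk => hS k (mem_sdiff.1 hk).1) hsym' c'
    (fun x => by simp [hg, hreal]) y
  obtain ⟨z, hz, hfz⟩ := exists_mem_segment_eq_zero_of_add_eq_zero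
    (continuous_re.comp (continuous_trigPoly S c)).continuousOn
    (by simpa [hg] using congrArg re hgx₀)
  refine ⟨z, ?_, Complex.ext hfz (hreal z)⟩
  have hzx₀ := segment_sub_add_subset_closedBall x₀ w hz
  rw [mem_closedBall] at hzx₀ hx₀ ⊢
  calc dist z y ≤ dist z x₀ + dist x₀ y := dist_triangle z x₀ y
    _ ≤ ‖w‖ + spectralDiam ω S' / 2 := add_le_add hzx₀ hx₀
    _ = spectralDiam ω S / 2 := by
      rw [norm_inv_four_norm_sq_smul_self (hS μ hμ),
        spectralDiam_eq_sdiff_pair_add hμ (hsym μ hμ) (hS μ hμ)]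
      ring

end TrigPoly

section IntLattice

variable {ι : Type*}

def intLatticeEmbedding : (ι → ℤ) →+ EuclideanSpace ℝ ι where
  toFun k := WithLp.toLp 2 fun j => (k j : ℝ)
  map_zero' := by ext; simp
  map_add' k l := by ext; simp

theorem intLatticeEmbedding_ne_zero {k : ι → ℤ} (hk : k ≠ 0) :
    intLatticeEmbedding k ≠ 0 := by
  contrapose! hk
  ext j
  simpa [intLatticeEmbedding] using congrArg (· j) hk

theorem inner_toLp_intLatticeEmbedding [Fintype ι] (x : ι → ℝ) (k : ι → ℤ) :
    ⟪WithLp.toLp 2 x, intLatticeEmbedding k⟫ = ∑ j, x j * k j := by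
  simp [intLatticeEmbedding, PiLp.inner_apply, mul_comm]

theorem norm_intLatticeEmbedding [Fintype ι] (k : ι → ℤ) :
    ‖intLatticeEmbedding k‖ = √(∑ j, (k j : ℝ) ^ 2) := by
  simp [intLatticeEmbedding, EuclideanSpace.norm_eq]

end IntLattice

theorem zero_in_ball_of_diam_D_general
    (d : ℕ)
    (S : Finset (Fin d → ℤ)) (h0 : (0 : Fin d → ℤ) ∉ S)
    (hsym : ∀ lam ∈ S, -lam ∈ S)
    (c : (Fin d → ℤ) → ℂ) (f : (Fin d → ℝ) → ℂ)
    (hf : ∀ x : Fin d → ℝ, f x = ∑ lam ∈ S,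
      c lam * Complex.exp (2 * Real.pi * Complex.I * ((∑ j, x j * (lam j : ℝ) : ℝ) : ℂ)))
    (hreal : ∀ x : Fin d → ℝ, (f x).im = 0)
    (y : Fin d → ℝ) :
    ∃ x : Fin d → ℝ,
      Real.sqrt (∑ j, (x j - y j) ^ 2) ≤
        (∑ lam ∈ S, 1 / (4 * Real.sqrt (∑ j, ((lam j : ℝ)) ^ 2))) / 2 ∧
      f x = 0 := by
  have hf' : ∀ x, f x = trigPoly intLatticeEmbedding S c (WithLp.toLp 2 x) := by
    simp [hf, trigPoly, inner_toLp_intLatticeEmbedding]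
  obtain ⟨x, hx, hx0⟩ := exists_trigPoly_eq_zero_mem_closedBall S
    (fun k hk => intLatticeEmbedding_ne_zero (ne_of_mem_of_not_mem hk h0)) hsym c
    (fun x => by simpa [hf'] using hreal x.ofLp) (WithLp.toLp 2 y)
  refine ⟨x.ofLp, ?_, by simpa [hf'] using hx0⟩
  simpa [EuclideanSpace.dist_eq, spectralDiam, norm_intLatticeEmbedding, Real.dist_eq] using hx

/-- **Theorem 1** (Kozma–Oravecz): a real trigonometric polynomial on the `d`-dimensional
torus with symmetric spectrum `S` not containing `0` has a zero in every closed euclidean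
ball of diameter `D(S) = ∑_{λ ∈ S} 1/(4‖λ‖₂)`. -/
theorem zero_in_ball_of_diam_D
    (d : ℕ) (hd : 1 ≤ d)
    (S : Finset (Fin d → ℤ)) (h0 : (0 : Fin d → ℤ) ∉ S)
    (hsym : ∀ lam ∈ S, -lam ∈ S)
    (c : (Fin d → ℤ) → ℂ) (f : (Fin d → ℝ) → ℂ)
    (hf : ∀ x : Fin d → ℝ, f x = ∑ lam ∈ S,
      c lam * Complex.exp (2 * Real.pi * Complex.I * ((∑ j, x j * (lam j : ℝ) : ℝ) : ℂ)))
    (hreal : ∀ x : Fin d → ℝ, (f x).im = 0)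
    (y : Fin d → ℝ) :
    ∃ x : Fin d → ℝ,
      Real.sqrt (∑ j, (x j - y j) ^ 2) ≤
        (∑ lam ∈ S, 1 / (4 * Real.sqrt (∑ j, ((lam j : ℝ)) ^ 2))) / 2 ∧
      f x = 0 :=
  zero_in_ball_of_diam_D_general d S h0 hsym c f hf hreal y
end

section
/- Let d ≥ 1 and let S ⊂ ℤ^d be a finite set with 0 ∉ S and −S = S. Let f(x) = Σ_{λ∈S} c(λ)·exp(2πi⟨x,λ⟩) be real-valued for every x ∈ ℝ^d. Then f has a zero in every closed axis-parallel cube of side length L(S), where L(S) = Σ_{λ∈S} ‖λ‖_∞/(4·‖λ‖₂²); that is, for every y ∈ ℝ^d there exists x with |x_j − y_j| ≤ L(S)/2 for all j and f(x) = 0. -/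
/-!
For `λ ≠ 0` let `v_λ = λ / (2‖λ‖₂²)`, so that `⟨v_λ, ±λ⟩ = ±1/2`: translating by `v_λ` flips
the sign of `e(⟨·, ±λ⟩)`. Let `T` contain one element of each pair `±λ` of `S`. Summed over the
`2^|T|` vertices `x₀ + ∑_{λ ∈ E} v_λ` (`E ⊆ T`), the frequency-`μ` part of `f` becomes
`c(μ) e(⟨x₀, μ⟩) ∏_{λ ∈ T} (1 + e(⟨v_λ, μ⟩))`, which vanishes because of the factor `λ = ±μ`.
So the real function `f` cannot have a strict sign on the vertices. In coordinate `j` they spread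
over at most `∑_{λ ∈ T} |λ_j| / (2‖λ‖₂²) ≤ L(S)`, so for a suitable `x₀` they lie in the cube of
side `L(S)` centred at `y`, and the intermediate value theorem on this connected cube gives a zero.
-/

open Finset

theorem AddChar.map_sum_eq_prod {A M ι : Type*} [AddCommMonoid A] [CommMonoid M]
    (ψ : AddChar A M) (s : Finset ι) (v : ι → A) : ψ (∑ i ∈ s, v i) = ∏ i ∈ s, ψ (v i) :=
  map_prod ψ.toMonoidHom (fun i => Multiplicative.ofAdd (v i)) s

theorem AddChar.sum_powerset_sum_mul_eq_zero {G ι κ : Type*} [AddCommMonoid G]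
    (ψ : κ → AddChar G ℂ) (c : κ → ℂ) {S : Finset κ} {T : Finset ι} (v : ι → G)
    (hT : ∀ m ∈ S, ∃ l ∈ T, ψ m (v l) = -1) (x : G) :
    ∑ E ∈ T.powerset, ∑ m ∈ S, c m * ψ m (x + ∑ l ∈ E, v l) = 0 := by
  rw [sum_comm]
  refine sum_eq_zero fun m hm => ?_
  obtain ⟨l, hl, hψ⟩ := hT m hm
  simp_rw [AddChar.map_add_eq_mul, AddChar.map_sum_eq_prod, ← mul_sum, ← prod_add_one]
  rw [prod_eq_zero hl (by rw [hψ, neg_add_cancel]), mul_zero, mul_zero]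

section Character

variable {ι : Type*} [Fintype ι]

noncomputable def expChar (u : ι → ℝ) : AddChar (ι → ℝ) ℂ where
  toFun x := Complex.exp (2 * Real.pi * Complex.I * (x ⬝ᵥ u : ℝ))
  map_zero_eq_one' := by simp
  map_add_eq_mul' x y := by rw [add_dotProduct, Complex.ofReal_add, mul_add, Complex.exp_add]

theorem expChar_apply (u x : ι → ℝ) :
    expChar u x = Complex.exp (2 * Real.pi * Complex.I * (x ⬝ᵥ u : ℝ)) := rfl

theorem continuous_expChar (u : ι → ℝ) : Continuous (expChar u) := by
  simp only [funext (expChar_apply u)]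
  fun_prop

theorem expChar_eq_neg_one {u x : ι → ℝ} (h : x ⬝ᵥ u = 1 / 2 ∨ x ⬝ᵥ u = -(1 / 2)) :
    expChar u x = -1 := by
  rw [expChar_apply]
  rcases h with h | h <;> rw [h]
  · convert Complex.exp_pi_mul_I using 2; push_cast; ring
  · convert Complex.exp_neg_pi_mul_I using 2; push_cast; ring

noncomputable def halfPeriod (u : ι → ℝ) : ι → ℝ := (2 * (u ⬝ᵥ u))⁻¹ • u

theorem halfPeriod_dotProduct_self {u : ι → ℝ} (hu : u ≠ 0) : halfPeriod u ⬝ᵥ u = 1 / 2 := by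
  have : u ⬝ᵥ u ≠ 0 := fun h => hu (dotProduct_self_eq_zero.1 h)
  rw [halfPeriod, smul_dotProduct, smul_eq_mul]
  field_simp

theorem expChar_halfPeriod {u : ι → ℝ} (hu : u ≠ 0) : expChar u (halfPeriod u) = -1 :=
  expChar_eq_neg_one (.inl (halfPeriod_dotProduct_self hu))

theorem expChar_neg_halfPeriod {u : ι → ℝ} (hu : u ≠ 0) : expChar (-u) (halfPeriod u) = -1 :=
  expChar_eq_neg_one (.inr (by rw [dotProduct_neg, halfPeriod_dotProduct_self hu]))

noncomputable def cubeWeight (u : ι → ℝ) : ℝ := (⨆ i, |u i|) / (4 * ∑ i, u i ^ 2)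

theorem cubeWeight_nonneg (u : ι → ℝ) : 0 ≤ cubeWeight u :=
  div_nonneg (Real.iSup_nonneg fun i => abs_nonneg _) (by positivity)

theorem cubeWeight_neg (u : ι → ℝ) : cubeWeight (-u) = cubeWeight u := by
  simp only [cubeWeight, Pi.neg_apply, abs_neg, neg_sq]

theorem abs_halfPeriod_le (u : ι → ℝ) (j : ι) : |halfPeriod u j| ≤ 2 * cubeWeight u := by
  have huu : u ⬝ᵥ u = ∑ i, u i ^ 2 := by simp only [dotProduct, sq]
  have hnonneg : 0 ≤ ∑ i, u i ^ 2 := sum_nonneg fun i _ => sq_nonneg (u i)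
  rw [halfPeriod, Pi.smul_apply, smul_eq_mul, abs_mul, huu, abs_inv,
    abs_of_nonneg (by positivity), ← div_eq_inv_mul, cubeWeight,
    show 2 * ((⨆ i, |u i|) / (4 * ∑ i, u i ^ 2)) = (⨆ i, |u i|) / (2 * ∑ i, u i ^ 2) by ring]
  gcongr
  exact le_ciSup (f := fun i => |u i|) (Finite.bddAbove_range _) j

end Character

theorem abs_sum_sub_half_sum_le {ι : Type*} {E T : Finset ι} (hET : E ⊆ T) (a : ι → ℝ) :
    |∑ i ∈ E, a i - (∑ i ∈ T, a i) / 2| ≤ (∑ i ∈ T, |a i|) / 2 := by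
  classical
  rw [← sum_sdiff hET, ← sum_sdiff hET (f := fun i => |a i|)]
  have h₁ := abs_sum_le_sum_abs a (T \ E)
  have h₂ := abs_sum_le_sum_abs a E
  rw [abs_le] at h₁ h₂ ⊢
  constructor <;> linarith

theorem sub_half_sum_add_sum_mem_closedBall {ι κ : Type*} [Fintype ι] {E T : Finset κ}
    (hET : E ⊆ T) (v : κ → ι → ℝ) (y : ι → ℝ) {r : ℝ} (hr : 0 ≤ r)
    (hv : ∀ j, ∑ l ∈ T, |v l j| ≤ 2 * r) :
    y - (1 / 2 : ℝ) • ∑ l ∈ T, v l + ∑ l ∈ E, v l ∈ Metric.closedBall y r := by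
  refine Metric.mem_closedBall.2 <| (dist_pi_le_iff hr).2 fun j => ?_
  have := abs_sum_sub_half_sum_le hET fun l => v l j
  simp only [Real.dist_eq, Pi.add_apply, Pi.sub_apply, Pi.smul_apply, Finset.sum_apply,
    smul_eq_mul]
  calc |y j - 1 / 2 * ∑ l ∈ T, v l j + ∑ l ∈ E, v l j - y j|
      = |∑ l ∈ E, v l j - (∑ l ∈ T, v l j) / 2| := by ring_nf
    _ ≤ r := by linarith [hv j]

theorem IsPreconnected.exists_eq_zero_of_sum_eq_zero {X ι : Type*} [TopologicalSpace X]
    {K : Set X} (hK : IsPreconnected K) {g : X → ℝ} (hg : ContinuousOn g K) {s : Finset ι}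
    (hs : s.Nonempty) {p : ι → X} (hp : ∀ i ∈ s, p i ∈ K) (hsum : ∑ i ∈ s, g (p i) = 0) :
    ∃ x ∈ K, g x = 0 := by
  obtain ⟨i, hi, hgi⟩ := exists_le_of_sum_le hs (f := fun i => g (p i)) (g := 0) (by simp [hsum])
  obtain ⟨j, hj, hgj⟩ := exists_le_of_sum_le hs (f := 0) (g := fun i => g (p i)) (by simp [hsum])
  exact hK.intermediate_value₂ (hp i hi) (hp j hj) hg continuousOn_const hgi hgj

theorem exists_mem_closedBall_eq_zero_of_sum_powerset_eq_zero {ι κ : Type*} [Fintype ι]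
    {g : (ι → ℝ) → ℝ} (hg : Continuous g) {T : Finset κ} (v : κ → ι → ℝ)
    (hsum : ∀ x, ∑ E ∈ T.powerset, g (x + ∑ l ∈ E, v l) = 0) (y : ι → ℝ) {r : ℝ} (hr : 0 ≤ r)
    (hv : ∀ j, ∑ l ∈ T, |v l j| ≤ 2 * r) : ∃ x ∈ Metric.closedBall y r, g x = 0 :=
  (convex_closedBall y r).isPreconnected.exists_eq_zero_of_sum_eq_zero hg.continuousOn
    T.powerset_nonempty
    (fun _ hE => sub_half_sum_add_sum_mem_closedBall (mem_powerset.1 hE) v y hr hv) (hsum _)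

theorem Finset.sum_eq_sum_filter_add_neg {G M : Type*} [InvolutiveNeg G] [AddCommMonoid M]
    {S : Finset G} {p : G → Prop} [DecidablePred p] (hsym : ∀ m ∈ S, -m ∈ S)
    (hp : ∀ m ∈ S, p m ∨ p (-m)) (hp' : ∀ m ∈ S, p m → ¬p (-m)) (g : G → M) :
    ∑ m ∈ S, g m = ∑ m ∈ S.filter p, (g m + g (-m)) := by
  rw [sum_add_distrib, ← sum_filter_add_sum_filter_not S p]
  congr 1
  refine sum_nbij' (- ·) (- ·) ?_ ?_ (fun _ _ => neg_neg _) (fun _ _ => neg_neg _)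
    (fun _ _ => by rw [neg_neg])
  · intro m hm
    simp only [mem_filter] at hm ⊢
    exact ⟨hsym m hm.1, (hp m hm.1).resolve_left hm.2⟩
  · intro m hm
    simp only [mem_filter] at hm ⊢
    exact ⟨hsym m hm.1, hp' m hm.1 hm.2⟩

theorem Pi.toLex_pos_or_toLex_neg_pos {ι α : Type*} [LinearOrder ι] [WellFoundedLT ι]
    [AddCommGroup α] [LinearOrder α] [IsOrderedAddMonoid α] {m : ι → α} (hm : m ≠ 0) :
    0 < toLex m ∨ 0 < toLex (-m) := by
  rw [toLex_neg, neg_pos]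
  exact lt_or_gt_of_ne fun h => hm (toLex_eq_zero.1 h.symm)

theorem Pi.not_toLex_neg_pos {ι α : Type*} [LinearOrder ι] [AddCommGroup α] [PartialOrder α]
    [IsOrderedAddMonoid α] {m : ι → α} (h : 0 < toLex m) : ¬0 < toLex (-m) := by
  rw [toLex_neg, neg_pos]
  exact lt_asymm h

theorem zero_in_cube_of_side_L_general
    (d : ℕ)
    (S : Finset (Fin d → ℤ)) (h0 : (0 : Fin d → ℤ) ∉ S)
    (hsym : ∀ lam ∈ S, -lam ∈ S)
    (c : (Fin d → ℤ) → ℂ) (f : (Fin d → ℝ) → ℂ)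
    (hf : ∀ x : Fin d → ℝ, f x = ∑ lam ∈ S,
      c lam * Complex.exp (2 * Real.pi * Complex.I * ((∑ j, x j * (lam j : ℝ) : ℝ) : ℂ)))
    (hreal : ∀ x : Fin d → ℝ, (f x).im = 0)
    (y : Fin d → ℝ) :
    ∃ x : Fin d → ℝ,
      (∀ j, |x j - y j| ≤
        (∑ lam ∈ S, (⨆ i, |(lam i : ℝ)|) / (4 * ∑ i, ((lam i : ℝ)) ^ 2)) / 2) ∧
      f x = 0 := by
  classical
  let u (m : Fin d → ℤ) : Fin d → ℝ := Int.cast ∘ m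
  have hu : ∀ m ∈ S, u m ≠ 0 := fun m hm => by
    simpa [u] using Int.cast_injective.comp_left.ne (ne_of_mem_of_not_mem hm h0)
  have hu_neg (m : Fin d → ℤ) : u (-m) = -u m := by ext; simp [u]
  let p (m : Fin d → ℤ) : Prop := 0 < toLex m
  have hp : ∀ m ∈ S, p m ∨ p (-m) := fun m hm =>
    Pi.toLex_pos_or_toLex_neg_pos (ne_of_mem_of_not_mem hm h0)
  let T := S.filter p
  let v (l : Fin d → ℤ) : Fin d → ℝ := halfPeriod (u l)
  have hcover : ∀ m ∈ S, ∃ l ∈ T, expChar (u m) (v l) = -1 := fun m hm => by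
    rcases hp m hm with h | h
    · exact ⟨m, mem_filter.2 ⟨hm, h⟩, expChar_halfPeriod (hu m hm)⟩
    · refine ⟨-m, mem_filter.2 ⟨hsym m hm, h⟩, ?_⟩
      simpa [v, hu_neg] using expChar_neg_halfPeriod (hu (-m) (hsym m hm))
  have hr : 0 ≤ (∑ m ∈ S, cubeWeight (u m)) / 2 :=
    div_nonneg (sum_nonneg fun m _ => cubeWeight_nonneg _) zero_le_two
  have hwidth (j : Fin d) : ∑ l ∈ T, |v l j| ≤ 2 * ((∑ m ∈ S, cubeWeight (u m)) / 2) := by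
    rw [mul_div_cancel₀ _ two_ne_zero, sum_eq_sum_filter_add_neg hsym hp
      fun _ _ => Pi.not_toLex_neg_pos]
    refine sum_le_sum fun l _ => ?_
    rw [hu_neg, cubeWeight_neg, ← two_mul]
    exact abs_halfPeriod_le (u l) j
  have hf' : f = fun x => ∑ m ∈ S, c m * expChar (u m) x := funext hf
  have hf_cont : Continuous f :=
    hf' ▸ continuous_finsetSum _ fun m _ => continuous_const.mul (continuous_expChar _)
  obtain ⟨x, hx, hfx⟩ := exists_mem_closedBall_eq_zero_of_sum_powerset_eq_zero
    (g := fun x => (f x).re) (Complex.continuous_re.comp hf_cont) v (fun x => by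
      rw [← Complex.re_sum, hf', AddChar.sum_powerset_sum_mul_eq_zero _ c v hcover,
        Complex.zero_re]) y hr hwidth
  exact ⟨x, fun j => Real.dist_eq _ _ ▸ (dist_pi_le_iff hr).1 hx j, Complex.ext hfx (hreal x)⟩

/-- Cube version of **Theorem 1** (Kozma–Oravecz): a real trigonometric polynomial on the
`d`-dimensional torus with symmetric spectrum `S` not containing `0` has a zero in every
closed axis-parallel cube of side length `L(S) = ∑_{λ ∈ S} ‖λ‖_∞/(4‖λ‖₂²)`. -/
theorem zero_in_cube_of_side_L
    (d : ℕ) (hd : 1 ≤ d)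
    (S : Finset (Fin d → ℤ)) (h0 : (0 : Fin d → ℤ) ∉ S)
    (hsym : ∀ lam ∈ S, -lam ∈ S)
    (c : (Fin d → ℤ) → ℂ) (f : (Fin d → ℝ) → ℂ)
    (hf : ∀ x : Fin d → ℝ, f x = ∑ lam ∈ S,
      c lam * Complex.exp (2 * Real.pi * Complex.I * ((∑ j, x j * (lam j : ℝ) : ℝ) : ℂ)))
    (hreal : ∀ x : Fin d → ℝ, (f x).im = 0)
    (y : Fin d → ℝ) :
    ∃ x : Fin d → ℝ,
      (∀ j, |x j - y j| ≤
        (∑ lam ∈ S, (⨆ i, |(lam i : ℝ)|) / (4 * ∑ i, ((lam i : ℝ)) ^ 2)) / 2) ∧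
      f x = 0 :=
  zero_in_cube_of_side_L_general d S h0 hsym c f hf hreal y
end

section
/- Let N ≥ 1 and K ≥ 0 be integers and let S = {λ ∈ ℤ : N ≤ |λ| ≤ N+K}. Then the supremum, over all real trigonometric polynomials f with spectrum contained in S and over all intervals I ⊆ [0,1] on which f has no zero, of the length |I|, equals (K+1)/(2N+K). -/
/-!
Write `e(t) = exp(2πit)` and `D = 2N + K`. Since `f` is real, `f = Re z` with
`z(t) = e(Nt) P(e(t))` for a polynomial `P` of degree at most `K`. On an interval `[u, v]` where
`f` has no zero, a continuous argument of `z` increases by less than `π`, for otherwise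
`Re z = |z| cos(arg z)` would vanish. Factoring `P` over `ℂ`, the argument of `e(Nt)` increases
by `2πN(v - u)` and that of each factor `e(t) - w` by at least `π(v - u) - π`: for `|w| ≤ 1`
because `e(t) - w = e(t)(1 - w e(-t))` with the second factor in the right half-plane, for
`|w| > 1` because the argument of `1 - e(t)/w` grows at rate at most `π` and is `1`-periodic.
Summing up, `(v - u) D < K + 1`.

Conversely, `sin(πDt) ∏_{j<K} sin(π((j+1)/D - t))` has spectrum in `S` and is nonnegative on
`[0, (K+1)/D]`, vanishing there only at the nodes `n/D`, where its translate by `1/(2D)` is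
positive. Adding a small multiple of that translate gives a real trigonometric polynomial without
zeros on any given compact subinterval of `(0, (K+1)/D)`.
-/
open Complex Set
open scoped Real ComplexConjugate LaurentPolynomial

theorem sub_lt_pi_of_cos_ne_zero {ψ : ℝ → ℝ} {u v : ℝ} (huv : u ≤ v)
    (hψ : ContinuousOn ψ (Icc u v)) (hcos : ∀ t ∈ Icc u v, Real.cos (ψ t) ≠ 0) :
    ψ v - ψ u < π := by
  by_contra! h
  obtain ⟨k, ⟨hk₁, hk₂⟩, -⟩ := existsUnique_add_zsmul_mem_Ico Real.pi_pos (π / 2) (ψ u)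
  obtain ⟨t, ht, hψt⟩ := intermediate_value_Icc huv hψ ⟨hk₁, by linarith⟩
  refine hcos t ht (Real.cos_eq_zero_iff.2 ⟨k, ?_⟩)
  rw [hψt, zsmul_eq_mul]
  ring

def IsContinuousArgOn (g : ℝ → ℂ) (θ : ℝ → ℝ) (s : Set ℝ) : Prop :=
  ContinuousOn θ s ∧ ∀ t ∈ s, g t = ‖g t‖ * exp (θ t * I)

namespace IsContinuousArgOn

variable {g g' : ℝ → ℂ} {θ : ℝ → ℝ} {s : Set ℝ}

lemma congr (h : IsContinuousArgOn g θ s) (hg : EqOn g g' s) : IsContinuousArgOn g' θ s :=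
  ⟨h.1, fun t ht => by rw [← hg ht]; exact h.2 t ht⟩

lemma mul {g₁ g₂ : ℝ → ℂ} {θ₁ θ₂ : ℝ → ℝ} (h₁ : IsContinuousArgOn g₁ θ₁ s)
    (h₂ : IsContinuousArgOn g₂ θ₂ s) :
    IsContinuousArgOn (fun t => g₁ t * g₂ t) (fun t => θ₁ t + θ₂ t) s := by
  refine ⟨h₁.1.add h₂.1, fun t ht => ?_⟩
  dsimp only
  conv_lhs => rw [h₁.2 t ht, h₂.2 t ht]
  push_cast [norm_mul, add_mul, exp_add]
  ring

lemma multiset_prod {ι : Type*} {m : Multiset ι} {g : ι → ℝ → ℂ} {θ : ι → ℝ → ℝ}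
    (h : ∀ i ∈ m, IsContinuousArgOn (g i) (θ i) s) :
    IsContinuousArgOn (fun t => (m.map fun i => g i t).prod)
      (fun t => (m.map fun i => θ i t).sum) s := by
  induction m using Multiset.induction_on with
  | empty => exact ⟨continuousOn_const, fun t _ => by simp⟩
  | cons i m ih =>
    simp only [Multiset.map_cons, Multiset.prod_cons, Multiset.sum_cons]
    exact (h i (Multiset.mem_cons_self i m)).mul
      (ih fun j hj => h j (Multiset.mem_cons_of_mem hj))

lemma const (c : ℂ) : IsContinuousArgOn (fun _ => c) (fun _ => arg c) s :=
  ⟨continuousOn_const, fun _ _ => (norm_mul_exp_arg_mul_I c).symm⟩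

lemma exp_mul_I (hθ : ContinuousOn θ s) : IsContinuousArgOn (fun t => exp (θ t * I)) θ s :=
  ⟨hθ, fun t _ => by rw [norm_exp_ofReal_mul_I, ofReal_one, one_mul]⟩

lemma of_mem_slitPlane (hg : ContinuousOn g s) (hslit : ∀ t ∈ s, g t ∈ slitPlane) :
    IsContinuousArgOn g (fun t => arg (g t)) s :=
  ⟨fun t ht => (continuousAt_arg (hslit t ht)).comp_continuousWithinAt (hg t ht),
    fun _ _ => (norm_mul_exp_arg_mul_I _).symm⟩

lemma sub_lt_pi {u v : ℝ} (h : IsContinuousArgOn g θ (Icc u v)) (huv : u ≤ v)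
    (hre : ∀ t ∈ Icc u v, (g t).re ≠ 0) : θ v - θ u < π :=
  sub_lt_pi_of_cos_ne_zero huv h.1 fun t ht hcos => hre t ht <| by
    rw [h.2 t ht, re_ofReal_mul, exp_ofReal_mul_I_re, hcos, mul_zero]

end IsContinuousArgOn

lemma half_le_re_inv_one_sub {a : ℂ} (ha : ‖a‖ ≤ 1) (h1 : a ≠ 1) : 1 / 2 ≤ ((1 - a)⁻¹).re := by
  have hpos : 0 < normSq (1 - a) := normSq_pos.2 (sub_ne_zero.2 h1.symm)
  have hsq : normSq a ≤ 1 := by rw [normSq_eq_norm_sq]; nlinarith [norm_nonneg a]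
  rw [inv_re, le_div_iff₀ hpos]
  have : normSq (1 - a) = 1 - 2 * a.re + normSq a := by
    simp only [normSq_apply, sub_re, sub_im, one_re, one_im]; ring
  simp only [sub_re, one_re]
  linarith

lemma hasDerivAt_exp_two_pi_I_mul (t : ℝ) :
    HasDerivAt (fun t : ℝ => exp (2 * π * I * t)) (2 * π * I * exp (2 * π * I * t)) t := by
  have := (((hasDerivAt_id (t : ℂ)).const_mul (2 * π * I)).cexp).comp_ofReal
  simpa [mul_comm] using this

lemma exp_two_pi_I_mul_add_one (t : ℝ) : exp (2 * π * I * ↑(t + 1)) = exp (2 * π * I * t) := by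
  rw [ofReal_add, ofReal_one, mul_add, mul_one, exp_add, exp_two_pi_mul_I, mul_one]

lemma norm_exp_two_pi_I_mul (t : ℝ) : ‖exp (2 * π * I * t)‖ = 1 := by
  rw [norm_exp]; simp

lemma exists_isContinuousArgOn_exp_sub_of_norm_le_one {w : ℂ} (hw : ‖w‖ ≤ 1) {u v : ℝ}
    (hne : ∀ t ∈ Icc u v, exp (2 * π * I * t) ≠ w) :
    ∃ θ : ℝ → ℝ, IsContinuousArgOn (fun t => exp (2 * π * I * t) - w) θ (Icc u v) ∧
      2 * π * (v - u) - π ≤ θ v - θ u := by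
  set x : ℝ → ℂ := fun t => 1 - w * exp (-(2 * π * I * t))
  have hx : ∀ t : ℝ, exp (2 * π * I * t) * x t = exp (2 * π * I * t) - w := fun t => by
    rw [mul_sub, mul_one, mul_left_comm, ← exp_add, add_neg_cancel, exp_zero, mul_one]
  have hxre : ∀ t : ℝ, 0 ≤ (x t).re := fun t => by
    have : ‖w * exp (-(2 * π * I * t))‖ ≤ 1 := by
      rw [norm_mul, norm_exp]; simpa using hw
    simp only [x, sub_re, one_re]
    linarith [re_le_norm (w * exp (-(2 * π * I * t)))]
  have hslit : ∀ t ∈ Icc u v, x t ∈ slitPlane := fun t ht => by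
    have hx0 : x t ≠ 0 := fun h0 => hne t ht (sub_eq_zero.1 (by rw [← hx, h0, mul_zero]))
    rcases (hxre t).lt_or_eq with hlt | heq
    · exact mem_slitPlane_iff.2 (Or.inl hlt)
    · exact mem_slitPlane_iff.2 (Or.inr fun him => hx0 (Complex.ext heq.symm him))
  refine ⟨fun t => 2 * π * t + arg (x t), ?_, ?_⟩
  · refine ((IsContinuousArgOn.exp_mul_I (θ := fun t => 2 * π * t) (by fun_prop)).mul
      (.of_mem_slitPlane (by simp only [x]; fun_prop) hslit)).congr fun t _ => ?_
    rw [← hx]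
    push_cast
    ring_nf
  · have hu := abs_le.1 (abs_arg_le_pi_div_two_iff.2 (hxre u))
    have hv := abs_le.1 (abs_arg_le_pi_div_two_iff.2 (hxre v))
    linarith

lemma one_sub_exp_two_pi_I_mul_div_mem_slitPlane {w : ℂ} (hw : 1 < ‖w‖) (t : ℝ) :
    1 - exp (2 * π * I * t) / w ∈ slitPlane := by
  rw [sub_eq_add_neg]
  refine mem_slitPlane_of_norm_lt_one ?_
  rw [norm_neg, norm_div, norm_exp_two_pi_I_mul, div_lt_one (one_pos.trans hw)]
  exact hw

lemma monotone_pi_mul_sub_arg_one_sub_exp_two_pi_I_mul_div {w : ℂ} (hw : 1 < ‖w‖) :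
    Monotone fun t : ℝ => π * t - arg (1 - exp (2 * π * I * t) / w) := by
  set a : ℝ → ℂ := fun t => exp (2 * π * I * t) / w
  have hderiv : ∀ t : ℝ,
      HasDerivAt (fun t => arg (1 - a t)) (-(2 * π * I * a t) / (1 - a t)).im t := fun t => by
    have h : HasDerivAt (fun t => log (1 - a t)) (-(2 * π * I * a t) / (1 - a t)) t := by
      simpa only [mul_div_assoc] using (((hasDerivAt_exp_two_pi_I_mul t).div_const w).const_sub
        1).clog_real (one_sub_exp_two_pi_I_mul_div_mem_slitPlane hw t)
    simpa only [Function.comp_def, imCLM_apply, log_im] using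
      imCLM.hasFDerivAt.comp_hasDerivAt t h
  have hbound : ∀ t : ℝ, (-(2 * π * I * a t) / (1 - a t)).im ≤ π := fun t => by
    have ha : ‖a t‖ ≤ 1 := by
      rw [norm_div, norm_exp_two_pi_I_mul]; exact div_le_one_of_le₀ hw.le (norm_nonneg w)
    have h1 : 1 - a t ≠ 0 := slitPlane_ne_zero (one_sub_exp_two_pi_I_mul_div_mem_slitPlane hw t)
    have : -(2 * π * I * a t) / (1 - a t) = ((2 * π : ℝ) : ℂ) * (I * (1 - (1 - a t)⁻¹)) := by
      field_simp; push_cast; ring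
    rw [this, im_ofReal_mul, I_mul_im, sub_re, one_re]
    nlinarith [Real.pi_pos, half_le_re_inv_one_sub ha fun h => h1 (by rw [h, sub_self])]
  exact monotone_of_hasDerivAt_nonneg (fun t => ((hasDerivAt_id t).const_mul π).sub (hderiv t))
    fun t => by simpa using hbound t

lemma exists_isContinuousArgOn_exp_sub_of_one_lt_norm {w : ℂ} (hw : 1 < ‖w‖) {u v : ℝ}
    (hvu : v ≤ u + 1) :
    ∃ θ : ℝ → ℝ, IsContinuousArgOn (fun t => exp (2 * π * I * t) - w) θ (Icc u v) ∧
      π * (v - u) - π ≤ θ v - θ u := by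
  have hw0 : w ≠ 0 := norm_pos_iff.1 (one_pos.trans hw)
  refine ⟨fun t => arg (-w) + arg (1 - exp (2 * π * I * t) / w), ((IsContinuousArgOn.const (-w)).mul
    (.of_mem_slitPlane (by fun_prop) fun t _ =>
      one_sub_exp_two_pi_I_mul_div_mem_slitPlane hw t)).congr fun t _ => ?_, ?_⟩
  · field_simp
    ring
  · have := monotone_pi_mul_sub_arg_one_sub_exp_two_pi_I_mul_div hw hvu
    simp only [exp_two_pi_I_mul_add_one] at this
    linarith

lemma exists_isContinuousArgOn_exp_sub (w : ℂ) {u v : ℝ} (huv : u ≤ v) (hvu : v ≤ u + 1)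
    (hne : ∀ t ∈ Icc u v, exp (2 * π * I * t) ≠ w) :
    ∃ θ : ℝ → ℝ, IsContinuousArgOn (fun t => exp (2 * π * I * t) - w) θ (Icc u v) ∧
      π * (v - u) - π ≤ θ v - θ u := by
  rcases le_or_gt ‖w‖ 1 with hw | hw
  · obtain ⟨θ, hθ, hinc⟩ := exists_isContinuousArgOn_exp_sub_of_norm_le_one hw hne
    exact ⟨θ, hθ, by nlinarith [Real.pi_pos]⟩
  · exact exists_isContinuousArgOn_exp_sub_of_one_lt_norm hw hvu

lemma exists_isContinuousArgOn_eval_exp (P : Polynomial ℂ) {u v : ℝ} (huv : u ≤ v)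
    (hvu : v ≤ u + 1) (hne : ∀ t ∈ Icc u v, P.eval (exp (2 * π * I * t)) ≠ 0) :
    ∃ θ : ℝ → ℝ, IsContinuousArgOn (fun t => P.eval (exp (2 * π * I * t))) θ (Icc u v) ∧
      P.natDegree * (π * (v - u) - π) ≤ θ v - θ u := by
  have hroots : ∀ w ∈ P.roots, ∀ t ∈ Icc u v, exp (2 * π * I * t) ≠ w := by
    rintro w hw t ht rfl
    exact hne t ht (Polynomial.mem_roots'.1 hw).2
  choose! θ hθ hθinc using fun w hw => exists_isContinuousArgOn_exp_sub w huv hvu (hroots w hw)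
  refine ⟨fun t => arg P.leadingCoeff + (P.roots.map fun w => θ w t).sum,
    ((IsContinuousArgOn.const _).mul (.multiset_prod hθ)).congr fun t _ => ?_, ?_⟩
  · conv_rhs => rw [← Polynomial.C_leadingCoeff_mul_prod_multiset_X_sub_C (p := P)
      IsAlgClosed.card_roots_eq_natDegree]
    simp [Polynomial.eval_multiset_prod, Multiset.map_map]
  · rw [add_sub_add_left_eq_sub, ← Multiset.sum_map_sub, ← IsAlgClosed.card_roots_eq_natDegree,
      ← nsmul_eq_mul, ← Multiset.card_map (fun w => θ w v - θ w u)]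
    exact Multiset.card_nsmul_le_sum fun x hx => by
      obtain ⟨w, hw, rfl⟩ := Multiset.mem_map.1 hx
      exact hθinc w hw

noncomputable def trigSum (S : Finset ℤ) (c : ℤ → ℂ) (t : ℝ) : ℂ :=
  ∑ lam ∈ S, c lam * exp (2 * π * I * lam * t)

section Band

variable {N K : ℕ} {S : Finset ℤ}

lemma sum_band_eq_sum_range {M : Type*} [AddCommMonoid M] (hN : 1 ≤ N)
    (hS : ∀ lam : ℤ, lam ∈ S ↔ (N : ℤ) ≤ |lam| ∧ |lam| ≤ (N : ℤ) + K) (F : ℤ → M) :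
    ∑ lam ∈ S, F lam = ∑ k ∈ Finset.range (K + 1), (F (N + k) + F (-(N + k))) := by
  have hS' : S = (Finset.range (K + 1)).image (fun k : ℕ => (N + k : ℤ)) ∪
      (Finset.range (K + 1)).image (fun k : ℕ => -(N + k : ℤ)) := by
    ext lam
    simp only [hS, Finset.mem_union, Finset.mem_image, Finset.mem_range]
    constructor
    · rintro ⟨h₁, h₂⟩
      rcases abs_cases lam with ⟨h, -⟩ | ⟨h, -⟩
      · exact Or.inl ⟨(lam - N).toNat, by omega, by omega⟩
      · exact Or.inr ⟨(-lam - N).toNat, by omega, by omega⟩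
    · rintro (⟨k, hk, rfl⟩ | ⟨k, hk, rfl⟩) <;>
        simp only [abs_neg, abs_of_nonneg (by positivity : (0 : ℤ) ≤ N + k)] <;> omega
  rw [hS', Finset.sum_union, Finset.sum_image, Finset.sum_image, Finset.sum_add_distrib]
  · exact fun _ _ _ _ h => by simpa using h
  · exact fun _ _ _ _ h => by simpa using h
  · simp only [Finset.disjoint_left, Finset.mem_image]
    omega

open Polynomial in
noncomputable def bandPoly (N K : ℕ) (c : ℤ → ℂ) : ℂ[X] :=
  ∑ k ∈ Finset.range (K + 1), C (c (N + k) + conj (c (-(N + k)))) * X ^ k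

lemma natDegree_bandPoly_le (c : ℤ → ℂ) : (bandPoly N K c).natDegree ≤ K :=
  Polynomial.natDegree_sum_le_of_forall_le _ _ fun _ hk =>
    (Polynomial.natDegree_C_mul_X_pow_le _ _).trans (Nat.lt_succ_iff.1 (Finset.mem_range.1 hk))

lemma re_trigSum_eq (hN : 1 ≤ N)
    (hS : ∀ lam : ℤ, lam ∈ S ↔ (N : ℤ) ≤ |lam| ∧ |lam| ≤ (N : ℤ) + K) (c : ℤ → ℂ) (t : ℝ) :
    (trigSum S c t).re =
      (exp (2 * π * I * N * t) * (bandPoly N K c).eval (exp (2 * π * I * t))).re := by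
  rw [trigSum, re_sum, sum_band_eq_sum_range hN hS, bandPoly, Polynomial.eval_finsetSum,
    Finset.mul_sum, re_sum]
  refine Finset.sum_congr rfl fun k _ => ?_
  have hpos : exp (2 * π * I * ↑(N + k : ℤ) * t) =
      exp (2 * π * I * N * t) * exp (2 * π * I * t) ^ k := by
    rw [← exp_nat_mul, ← exp_add]; push_cast; ring_nf
  have hneg :
      exp (2 * π * I * ↑(-(N + k) : ℤ) * t) = conj (exp (2 * π * I * ↑(N + k : ℤ) * t)) := by
    rw [← exp_conj, map_mul, map_mul, map_mul, map_mul, map_ofNat, conj_ofReal, conj_ofReal,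
      conj_I, map_intCast]
    push_cast; ring_nf
  rw [hneg, ← conj_re (_ * conj _), map_mul, conj_conj, ← add_re, ← add_mul, hpos]
  simp only [Polynomial.eval_mul, Polynomial.eval_C, Polynomial.eval_pow, Polynomial.eval_X]
  ring_nf

theorem mul_lt_of_re_trigSum_ne_zero (hN : 1 ≤ N)
    (hS : ∀ lam : ℤ, lam ∈ S ↔ (N : ℤ) ≤ |lam| ∧ |lam| ≤ (N : ℤ) + K) (c : ℤ → ℂ) {u v : ℝ}
    (huv : u ≤ v) (hvu : v ≤ u + 1) (hre : ∀ t ∈ Icc u v, (trigSum S c t).re ≠ 0) :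
    (v - u) * (2 * N + K) < K + 1 := by
  set P := bandPoly N K c
  have hre' : ∀ t ∈ Icc u v, (exp (2 * π * I * N * t) * P.eval (exp (2 * π * I * t))).re ≠ 0 :=
    fun t ht => re_trigSum_eq hN hS c t ▸ hre t ht
  obtain ⟨θ, hθ, hinc⟩ := exists_isContinuousArgOn_eval_exp P huv hvu fun t ht h0 =>
    hre' t ht (by rw [h0, mul_zero, zero_re])
  have hlt := (((IsContinuousArgOn.exp_mul_I (θ := fun t => 2 * π * N * t) (by fun_prop)).mul
    hθ).congr fun t _ => by push_cast; ring_nf).sub_lt_pi huv hre'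
  have hdeg : (P.natDegree : ℝ) ≤ K := Nat.cast_le.2 (natDegree_bandPoly_le c)
  have hneg : π * (v - u) - π ≤ 0 := by nlinarith [Real.pi_pos]
  have : π * ((v - u) * (2 * N + K) - (K + 1)) < 0 := by nlinarith
  nlinarith [Real.pi_pos]

end Band

open LaurentPolynomial in
lemma LaurentPolynomial.eval₂_eq_sum_coeff {R S : Type*} [CommSemiring R] [CommSemiring S]
    (f : R →+* S) (x : Sˣ) (p : R[T;T⁻¹]) :
    eval₂ f x p = p.coeff.sum fun n r => f r * ↑(x ^ n) := by
  induction p using LaurentPolynomial.induction_on' with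
  | add p q hp hq =>
    rw [map_add, hp, hq, AddMonoidAlgebra.coeff_add, Finsupp.sum_add_index'] <;>
      simp [add_mul]
  | C_mul_T n a =>
    rw [eval₂_C_mul_T, ← single_eq_C_mul_T, AddMonoidAlgebra.coeff_single,
      Finsupp.sum_single_index (by simp)]

/- Working with `q = exp(iπt)` makes the half-integer frequencies of `sin(π(a + nt))` integral:
frequency `λ` becomes the exponent `2λ` of `q`. -/
noncomputable def expPiIUnit (t : ℝ) : ℂˣ := Units.mk0 (exp (π * t * I)) (exp_ne_zero _)

lemma val_expPiIUnit_zpow (t : ℝ) (n : ℤ) :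
    ((expPiIUnit t ^ n : ℂˣ) : ℂ) = exp (n * (π * t * I)) := by
  rw [Units.val_zpow_eq_zpow_val, exp_int_mul]; rfl

open LaurentPolynomial in
noncomputable def sinLaurent (n : ℤ) (a : ℝ) : ℂ[T;T⁻¹] :=
  C (-(I / 2) * exp (π * a * I)) * T n + C (I / 2 * exp (-(π * a * I))) * T (-n)

open LaurentPolynomial in
lemma eval₂_sinLaurent (n : ℤ) (a t : ℝ) :
    eval₂ (RingHom.id ℂ) (expPiIUnit t) (sinLaurent n a) = Real.sin (π * (a + n * t)) := by
  simp only [sinLaurent, map_add, eval₂_C_mul_T, RingHom.id_apply, val_expPiIUnit_zpow,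
    ofReal_sin, Complex.sin]
  push_cast
  simp only [mul_add, add_mul, neg_add, exp_add]
  ring_nf

lemma support_sinLaurent (n : ℤ) (a : ℝ) : (sinLaurent n a).coeff.support ⊆ {n, -n} := by
  classical
  intro m hm
  simp only [sinLaurent, ← LaurentPolynomial.single_eq_C_mul_T, AddMonoidAlgebra.coeff_add,
    AddMonoidAlgebra.coeff_single] at hm
  rw [Finset.mem_insert, Finset.mem_singleton]
  rcases Finset.mem_union.1 (Finsupp.support_add hm) with h | h
  · exact Or.inl (Finset.mem_singleton.1 (Finsupp.support_single_subset h))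
  · exact Or.inr (Finset.mem_singleton.1 (Finsupp.support_single_subset h))

lemma trigSum_eq_eval₂ {S : Finset ℤ} (F : ℂ[T;T⁻¹])
    (hF : ∀ n ∈ F.coeff.support, ∃ lam ∈ S, n = 2 * lam) (t : ℝ) :
    trigSum S (fun lam => F.coeff (2 * lam)) t =
      LaurentPolynomial.eval₂ (RingHom.id ℂ) (expPiIUnit t) F := by
  classical
  have hsub : F.coeff.support ⊆ S.image (2 * ·) := fun n hn => by
    obtain ⟨lam, hlam, rfl⟩ := hF n hn
    exact Finset.mem_image_of_mem _ hlam
  rw [LaurentPolynomial.eval₂_eq_sum_coeff, Finsupp.sum_of_support_subset _ hsub _ (by simp),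
    Finset.sum_image (fun _ _ _ _ h => by simpa using h), trigSum]
  refine Finset.sum_congr rfl fun lam _ => ?_
  rw [RingHom.id_apply, val_expPiIUnit_zpow]
  push_cast
  ring_nf

noncomputable def extremalFun (D K : ℕ) (t : ℝ) : ℝ :=
  Real.sin (π * D * t) * ∏ j ∈ Finset.range K, Real.sin (π * ((j + 1) / D - t))

open LaurentPolynomial in
noncomputable def extremalLaurent (D K : ℕ) : ℂ[T;T⁻¹] :=
  sinLaurent D 0 * ∏ j ∈ Finset.range K, sinLaurent (-1) ((j + 1) / D)

lemma eval₂_extremalLaurent (D K : ℕ) (t : ℝ) :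
    LaurentPolynomial.eval₂ (RingHom.id ℂ) (expPiIUnit t) (extremalLaurent D K) =
      extremalFun D K t := by
  simp only [extremalLaurent, extremalFun, map_mul, map_prod, eval₂_sinLaurent, ofReal_mul,
    ofReal_prod]
  push_cast
  congr 1
  · ring_nf
  · exact Finset.prod_congr rfl fun j _ => by ring_nf

lemma support_prod_sinLaurent (a : ℕ → ℝ) (K : ℕ) :
    ∀ n ∈ (∏ j ∈ Finset.range K, sinLaurent (-1) (a j)).coeff.support,
      -(K : ℤ) ≤ n ∧ n ≤ K ∧ (n + K) % 2 = 0 := by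
  classical
  induction K with
  | zero =>
    intro n hn
    rw [Finset.prod_range_zero, ← LaurentPolynomial.single_zero_one_eq_one,
      AddMonoidAlgebra.coeff_single] at hn
    have := Finset.mem_singleton.1 (Finsupp.support_single_subset hn)
    omega
  | succ K ih =>
    intro n hn
    rw [Finset.prod_range_succ] at hn
    obtain ⟨x, hx, y, hy, rfl⟩ :=
      Finset.mem_add.1 (AddMonoidAlgebra.support_coeff_mul_subset _ _ hn)
    have := ih x hx
    have hy' := support_sinLaurent _ _ hy
    simp only [Finset.mem_insert, Finset.mem_singleton] at hy'
    omega

lemma exists_trigSum_eq_extremalFun {N K : ℕ} {S : Finset ℤ}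
    (hS : ∀ lam : ℤ, lam ∈ S ↔ (N : ℤ) ≤ |lam| ∧ |lam| ≤ (N : ℤ) + K) :
    ∃ c : ℤ → ℂ, ∀ t, trigSum S c t = extremalFun (2 * N + K) K t := by
  classical
  refine ⟨_, fun t => (trigSum_eq_eval₂ _ (fun n hn => ?_) t).trans (eval₂_extremalLaurent _ _ t)⟩
  obtain ⟨x, hx, y, hy, rfl⟩ :=
    Finset.mem_add.1 (AddMonoidAlgebra.support_coeff_mul_subset _ _ hn)
  have hx' := support_sinLaurent _ _ hx
  have hy' := support_prod_sinLaurent _ K y hy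
  simp only [Finset.mem_insert, Finset.mem_singleton] at hx'
  refine ⟨(x + y) / 2, (hS _).2 ⟨le_abs.2 ?_, abs_le.2 ⟨?_, ?_⟩⟩, ?_⟩ <;> push_cast at hx' <;> omega

lemma extremalFun_eq_zero {D K n : ℕ} {t : ℝ} (h : (D : ℝ) * t = n) : extremalFun D K t = 0 := by
  rw [extremalFun, mul_assoc, h, mul_comm π, Real.sin_nat_mul_pi, zero_mul]

lemma continuous_extremalFun (D K : ℕ) : Continuous (extremalFun D K) := by
  unfold extremalFun; fun_prop

lemma extremalFun_pos {D K : ℕ} (hKD : K ≤ D) {t : ℝ} (ht : 0 < t) (htK : D * t < K + 1)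
    (hint : ∀ n : ℕ, (D : ℝ) * t ≠ n) : 0 < extremalFun D K t := by
  have hD : (0 : ℝ) < D := by
    rcases Nat.eq_zero_or_pos D with h | h
    · exact absurd (by simp [h]) (hint 0)
    · exact_mod_cast h
  have hKD' : (K : ℝ) ≤ D := by exact_mod_cast hKD
  have sin_pos : ∀ y : ℝ, 0 < y → y < 1 → 0 < Real.sin (π * y) := fun y h0 h1 =>
    Real.sin_pos_of_pos_of_lt_pi (by positivity) (by nlinarith [Real.pi_pos])
  set m := ⌊(D : ℝ) * t⌋₊
  have hm : (m : ℝ) < D * t := lt_of_le_of_ne (Nat.floor_le (by positivity)) (hint m).symm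
  have hm1 : (D : ℝ) * t < m + 1 := Nat.lt_floor_add_one _
  have hmK : m ≤ K := by
    have : (m : ℝ) < K + 1 := by linarith
    exact_mod_cast Nat.lt_succ_iff.1 (by exact_mod_cast this)
  have hsq : ((-1 : ℝ) ^ m) * (-1) ^ m = 1 := by rw [← mul_pow]; norm_num
  have hfirst : 0 < (-1) ^ m * Real.sin (π * D * t) := by
    rw [show π * D * t = π * (D * t - m) + m * π by ring, Real.sin_add_nat_mul_pi, ← mul_assoc,
      hsq, one_mul]
    exact sin_pos _ (by linarith) (by linarith)
  have hsecond : 0 < (-1) ^ m * ∏ j ∈ Finset.range K, Real.sin (π * ((j + 1) / D - t)) := by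
    have hneg : (-1) ^ m * ∏ j ∈ Finset.range m, Real.sin (π * ((j + 1) / D - t)) =
        ∏ j ∈ Finset.range m, -Real.sin (π * ((j + 1) / D - t)) := by
      rw [Finset.prod_neg, Finset.card_range]
    rw [← Finset.prod_range_mul_prod_Ico _ hmK, ← mul_assoc, hneg]
    refine mul_pos (Finset.prod_pos fun j hj => ?_) (Finset.prod_pos fun j hj => ?_)
    · have hj : (j : ℝ) + 1 ≤ m := by exact_mod_cast Finset.mem_range.1 hj
      rw [show π * ((j + 1) / D - t) = -(π * ((D * t - (j + 1)) / D)) by field_simp; ring,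
        Real.sin_neg, neg_neg]
      exact sin_pos _ (div_pos (by linarith) hD) ((div_lt_one hD).2 (by linarith))
    · have hj := Finset.mem_Ico.1 hj
      have hj1 : (m : ℝ) + 1 ≤ j + 1 := by exact_mod_cast Nat.succ_le_succ hj.1
      have hj2 : (j : ℝ) + 1 ≤ K := by exact_mod_cast hj.2
      rw [show ((j : ℝ) + 1) / D - t = (j + 1 - D * t) / D by field_simp]
      exact sin_pos _ (div_pos (by linarith) hD) ((div_lt_one hD).2 (by nlinarith))
  calc (0 : ℝ) < ((-1) ^ m * Real.sin (π * D * t)) *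
        ((-1) ^ m * ∏ j ∈ Finset.range K, Real.sin (π * ((j + 1) / D - t))) :=
        mul_pos hfirst hsecond
    _ = extremalFun D K t := by rw [extremalFun, mul_mul_mul_comm, hsq, one_mul]

lemma extremalFun_pos_or_translate_pos {D K : ℕ} (hD : 0 < D) (hKD : K ≤ D) {t : ℝ}
    (ht : 0 < t) (htK : D * t < K + 1) :
    0 < extremalFun D K t ∨ extremalFun D K t = 0 ∧ 0 < extremalFun D K (t + 1 / (2 * D)) := by
  by_cases h : ∃ n : ℕ, (D : ℝ) * t = n
  · obtain ⟨n, hn⟩ := h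
    have hD' : (0 : ℝ) < D := by exact_mod_cast hD
    have hDs : (D : ℝ) * (t + 1 / (2 * D)) = n + 1 / 2 := by rw [mul_add, hn]; field_simp
    have hnK : (n : ℝ) ≤ K := by
      exact_mod_cast Nat.lt_succ_iff.1 (by exact_mod_cast hn ▸ htK : n < K + 1)
    refine Or.inr ⟨extremalFun_eq_zero hn, extremalFun_pos hKD (by positivity) (by linarith) ?_⟩
    intro k hk
    rw [hDs] at hk
    have : ((2 * n + 1 : ℕ) : ℝ) = (2 * k : ℕ) := by push_cast; linarith
    have := Nat.cast_injective this
    omega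
  · exact Or.inl (extremalFun_pos hKD ht htK fun n hn => h ⟨n, hn⟩)

lemma IsCompact.exists_pos_forall_pos_add_mul {X : Type*} [TopologicalSpace X] {C : Set X}
    (hC : IsCompact C) {g h : X → ℝ} (hg : ContinuousOn g C) (hh : ContinuousOn h C)
    (hgh : ∀ x ∈ C, 0 < g x ∨ g x = 0 ∧ 0 < h x) :
    ∃ δ > 0, ∀ x ∈ C, 0 < g x + δ * h x := by
  have hg0 : ∀ x ∈ C, 0 ≤ g x := fun x hx => (hgh x hx).elim le_of_lt fun h => h.1.ge
  obtain ⟨m, hm, hmle⟩ := hC.exists_forall_le' (hg.sup hh) (a := 0) fun x hx =>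
    (hgh x hx).elim (lt_sup_of_lt_left ·) fun h => lt_sup_of_lt_right h.2
  obtain ⟨B, hB⟩ := hC.exists_bound_of_continuousOn hh
  have hδ : 0 < m / (|B| + 1) := by positivity
  have hδB : m / (|B| + 1) * |B| < m := by
    rw [div_mul_eq_mul_div, div_lt_iff₀ (by positivity)]; nlinarith
  refine ⟨m / (|B| + 1), hδ, fun x hx => ?_⟩
  rcases le_sup_iff.1 (hmle x hx) with hgx | hhx
  · have : -|B| ≤ h x := neg_le_of_abs_le ((Real.norm_eq_abs _ ▸ hB x hx).trans (le_abs_self B))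
    nlinarith
  · nlinarith [hg0 x hx]

lemma trigSum_mul_one_add (S : Finset ℤ) (c : ℤ → ℂ) (δ s t : ℝ) :
    trigSum S (fun lam => c lam * (1 + δ * exp (2 * π * I * lam * s))) t =
      trigSum S c t + δ * trigSum S c (t + s) := by
  simp only [trigSum, Finset.mul_sum, ← Finset.sum_add_distrib]
  refine Finset.sum_congr rfl fun lam _ => ?_
  rw [ofReal_add, mul_add (2 * π * I * (lam : ℂ)), exp_add]
  ring

theorem exists_trigSum_ne_zero_on_Icc {N K : ℕ} (hN : 1 ≤ N) {S : Finset ℤ}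
    (hS : ∀ lam : ℤ, lam ∈ S ↔ (N : ℤ) ≤ |lam| ∧ |lam| ≤ (N : ℤ) + K) {ε : ℝ} (hε : 0 < ε) :
    ∃ c : ℤ → ℂ, (∀ t, (trigSum S c t).im = 0) ∧
      ∀ t ∈ Icc ε ((K + 1) / (2 * N + K) - ε), trigSum S c t ≠ 0 := by
  obtain ⟨c, hc⟩ := exists_trigSum_eq_extremalFun hS
  have hD : 0 < 2 * N + K := by omega
  have hDcast : ((2 * N + K : ℕ) : ℝ) = 2 * N + K := by push_cast; ring
  set f := extremalFun (2 * N + K) K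
  set s : ℝ := 1 / (2 * (2 * N + K : ℕ))
  obtain ⟨δ, hδ, hpos⟩ := IsCompact.exists_pos_forall_pos_add_mul
    (isCompact_Icc (a := ε) (b := (K + 1) / (2 * N + K) - ε)) (g := f)
    (h := fun t => f (t + s)) (continuous_extremalFun _ K).continuousOn
    ((continuous_extremalFun _ K).comp (continuous_add_const s)).continuousOn fun t ht => by
      refine extremalFun_pos_or_translate_pos hD (by omega) (hε.trans_le ht.1) ?_
      rw [hDcast, mul_comm, ← lt_div_iff₀ (by positivity)]
      linarith [ht.2]
  have hsum : ∀ t, trigSum S (fun lam => c lam * (1 + δ * exp (2 * π * I * lam * s))) t =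
      ↑(f t + δ * f (t + s)) := fun t => by
    rw [trigSum_mul_one_add, hc, hc]; push_cast; rfl
  refine ⟨_, fun t => by rw [hsum]; exact ofReal_im _, fun t ht => ?_⟩
  rw [hsum, ofReal_ne_zero]
  exact (hpos t ht).ne'

/-- **Theorem 2** (Kozma–Oravecz): for the spectrum `S = {λ ∈ ℤ : N ≤ |λ| ≤ N + K}`,
the supremum of the lengths of intervals `I ⊆ [0,1]` on which some real trigonometric
polynomial with spectrum in `S` has no zero equals `(K+1)/(2N+K)`. -/
theorem M_interval_spectrum
    (N K : ℕ) (hN : 1 ≤ N)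
    (S : Finset ℤ)
    (hS : ∀ lam : ℤ, lam ∈ S ↔ (N : ℤ) ≤ |lam| ∧ |lam| ≤ (N : ℤ) + K) :
    sSup {r : ℝ | ∃ (c : ℤ → ℂ) (u v : ℝ), 0 ≤ u ∧ u ≤ v ∧ v ≤ 1 ∧ r = v - u ∧
        (∀ t : ℝ, (∑ lam ∈ S,
          c lam * Complex.exp (2 * Real.pi * Complex.I * (lam : ℂ) * (t : ℂ))).im = 0) ∧
        (∀ t ∈ Set.Icc u v, (∑ lam ∈ S,
          c lam * Complex.exp (2 * Real.pi * Complex.I * (lam : ℂ) * (t : ℂ))) ≠ 0)}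
      = ((K : ℝ) + 1) / (2 * N + K) := by
  set A := {r : ℝ | ∃ (c : ℤ → ℂ) (u v : ℝ), 0 ≤ u ∧ u ≤ v ∧ v ≤ 1 ∧ r = v - u ∧
    (∀ t : ℝ, (trigSum S c t).im = 0) ∧ ∀ t ∈ Icc u v, trigSum S c t ≠ 0}
  set L : ℝ := (K + 1) / (2 * N + K)
  have hL1 : L ≤ 1 := (div_le_one (by positivity)).2 <| by
    linarith [show (1 : ℝ) ≤ N by exact_mod_cast hN]
  have hmem : ∀ ε, 0 < ε → 2 * ε < L → L - 2 * ε ∈ A := fun ε hε hεL => by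
    obtain ⟨c, hreal, hnz⟩ := exists_trigSum_ne_zero_on_Icc hN hS hε
    exact ⟨c, ε, L - ε, hε.le, by linarith, by linarith, by ring, hreal, hnz⟩
  have hL : 0 < L := by positivity
  refine csSup_eq_of_forall_le_of_forall_lt_exists_gt
    ⟨_, hmem (L / 4) (by positivity) (by linarith)⟩ ?_
    fun w hw => ⟨_, hmem (min L (L - w) / 4) (by positivity) ?_, ?_⟩
  · rintro r ⟨c, u, v, hu, huv, hv, rfl, hreal, hnz⟩
    rw [le_div_iff₀ (by positivity)]
    exact (mul_lt_of_re_trigSum_ne_zero hN hS c huv (by linarith) fun t ht h0 =>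
      hnz t ht (Complex.ext h0 (hreal t))).le
  · linarith [min_le_left L (L - w)]
  · linarith [min_le_right L (L - w)]
end

section
/- Let N, K, b be integers with N ≥ 1, K ≥ 0, b ≥ 1 and b < 2N, and let S = {λ ∈ ℤ : |λ| = N + jb for some 0 ≤ j ≤ K}. If f is a real trigonometric polynomial with spectrum contained in S and f(t) > 0 for every t in an interval I ⊂ ℝ, then the length of I satisfies |I| ≤ (K+1)/(bK+2N). -/
/-!
Put `D = bK + 2N` and `β = πb/D`. For `λ ∈ S` the number `e^{2πiλ/D}` is one of the points
`-e^{i(2j-K)β}`, `0 ≤ j ≤ K`, which are the roots of `P(t) = ∏_{j ≤ K} (1 + e^{i(2j-K)β} t)`.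
By the `q`-binomial theorem at `q = e^{2iβ}`, the coefficients of `P` are the real numbers
`a_k = ∏_{i<k} sin((K+1-i)β) / sin((i+1)β)`, and they are positive because `b < 2N` gives
`(K+1)β < π`. Hence `∑_k a_k f(u + k/D) = 0`, so `f` cannot be positive at all of the `K + 2` points
`u, u + 1/D, …, u + (K+1)/D`; but they all lie in `[u, v]` as soon as `v - u > (K+1)/D`.
-/

open Finset Real
open Complex (I)
open scoped Complex

section GaussBinom

variable {R : Type*} [CommRing R]

def gaussBinom (q : R) : ℕ → ℕ → R
  | _, 0 => 1
  | 0, _ + 1 => 0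
  | n + 1, k + 1 => gaussBinom q n k + q ^ (k + 1) * gaussBinom q n (k + 1)

theorem gaussBinom_of_lt (q : R) {n k : ℕ} (h : n < k) : gaussBinom q n k = 0 := by
  induction n generalizing k with
  | zero => obtain ⟨k, rfl⟩ := Nat.exists_eq_succ_of_ne_zero (by omega : k ≠ 0); rfl
  | succ n ih =>
    obtain ⟨k, rfl⟩ := Nat.exists_eq_succ_of_ne_zero (by omega : k ≠ 0)
    rw [gaussBinom, ih (by omega), ih (by omega), mul_zero, add_zero]

/-- The `q`-binomial theorem (Rothe). -/
theorem prod_one_add_pow_mul (q t : R) (n : ℕ) :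
    ∏ j ∈ range n, (1 + q ^ j * t) =
      ∑ k ∈ range (n + 1), q ^ k.choose 2 * gaussBinom q n k * t ^ k := by
  induction n generalizing t with
  | zero => simp [gaussBinom]
  | succ n ih =>
    set h : ℕ → R := fun k ↦ q ^ k.choose 2 * gaussBinom q n k * (q * t) ^ k
    have h_top : h (n + 1) = 0 := by simp [h, gaussBinom_of_lt q (Nat.lt_succ_self n)]
    have h_shift : ∑ k ∈ range (n + 1), h (k + 1) = ∑ k ∈ range (n + 1), h k - 1 := by
      have h_zero : h 0 = 1 := by simp [h, gaussBinom]
      have := (sum_range_succ' h (n + 1)).symm.trans (sum_range_succ h (n + 1))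
      rw [h_zero, h_top] at this
      linear_combination this
    calc ∏ j ∈ range (n + 1), (1 + q ^ j * t)
        = (1 + t) * ∑ k ∈ range (n + 1), h k := by
          rw [prod_range_succ', mul_comm]
          simp only [pow_succ, mul_assoc, pow_zero, one_mul, ih, h]
      _ = ∑ k ∈ range (n + 1), (t * h k + h (k + 1)) + 1 := by
          rw [sum_add_distrib, h_shift, ← mul_sum]; ring
      _ = _ := by
          rw [sum_range_succ' _ (n + 1)]
          congr 1
          · refine sum_congr rfl fun k _ ↦ ?_
            simp only [h, gaussBinom, Nat.choose_succ_succ', Nat.choose_one_right, pow_add]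
            ring
          · simp [gaussBinom]

theorem gaussBinom_mul_prod_one_sub_pow (q : R) (n k : ℕ) :
    gaussBinom q n k * ∏ i ∈ range k, (1 - q ^ (i + 1)) = ∏ i ∈ range k, (1 - q ^ (n - i)) := by
  induction n generalizing k with
  | zero =>
    cases k with
    | zero => simp [gaussBinom]
    | succ k => simp [gaussBinom, prod_range_succ']
  | succ n ih =>
    cases k with
    | zero => simp [gaussBinom]
    | succ k =>
      by_cases hkn : n < k
      · rw [gaussBinom_of_lt q (by omega), zero_mul, eq_comm]
        exact prod_eq_zero (i := n + 1) (by simp; omega) (by simp)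
      have hpow : q ^ (k + 1) * q ^ (n - k) = q ^ (n + 1) := by rw [← pow_add]; congr 1; omega
      have ih_succ := ih (k + 1)
      rw [prod_range_succ, prod_range_succ, ← ih k] at ih_succ
      rw [gaussBinom, prod_range_succ (fun i ↦ 1 - q ^ (i + 1)),
        prod_range_succ' (fun i ↦ 1 - q ^ (n + 1 - i))]
      simp only [Nat.add_sub_add_right, Nat.sub_zero, ← ih k]
      linear_combination
        ih_succ * q ^ (k + 1) - gaussBinom q n k * (∏ i ∈ range k, (1 - q ^ (i + 1))) * hpow

end GaussBinom

theorem one_sub_exp_two_mul_I (x : ℝ) : 1 - cexp (2 * x * I) = -2 * I * cexp (x * I) * sin x := by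
  have h := Complex.exp_add (x * I) (-(x * I))
  rw [add_neg_cancel, Complex.exp_zero] at h
  rw [Complex.ofReal_sin, Complex.sin, show 2 * (x : ℂ) * I = x * I + x * I by ring,
    Complex.exp_add, show -(x : ℂ) * I = -(x * I) by ring]
  linear_combination h + (cexp (x * I) * cexp (-(x * I)) - cexp (x * I) ^ 2) * Complex.I_sq

theorem exp_two_mul_I_pow (β : ℝ) (m : ℕ) : cexp (2 * β * I) ^ m = cexp (2 * ↑(m * β) * I) := by
  rw [← Complex.exp_nat_mul]; push_cast; ring_nf

noncomputable def sinBinom (β : ℝ) (n k : ℕ) : ℝ :=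
  ∏ i ∈ range k, sin ((n - i) * β) / sin ((i + 1) * β)

theorem sin_mul_pos {β : ℝ} {n : ℕ} (hβ : 0 < β) (hnβ : n * β < π) {x : ℝ} (hx : 0 < x)
    (hxn : x ≤ n) : 0 < sin (x * β) :=
  sin_pos_of_pos_of_lt_pi (by positivity) (by nlinarith)

theorem sinBinom_pos {β : ℝ} {n k : ℕ} (hβ : 0 < β) (hnβ : n * β < π) (hk : k ≤ n) :
    0 < sinBinom β n k := by
  refine prod_pos fun i hi ↦ div_pos (sin_mul_pos hβ hnβ ?_ ?_) (sin_mul_pos hβ hnβ ?_ ?_) <;>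
  · simp only [mem_range] at hi
    have : (i : ℝ) + 1 ≤ k := by exact_mod_cast hi
    have : (k : ℝ) ≤ n := by exact_mod_cast hk
    linarith

theorem exp_mul_one_sub_exp_eq {a x y : ℝ} (hy : sin y ≠ 0) (h : a + x = y) :
    cexp (a * I) * (1 - cexp (2 * x * I)) = ↑(sin x / sin y) * (1 - cexp (2 * y * I)) := by
  subst h
  rw [one_sub_exp_two_mul_I, one_sub_exp_two_mul_I, Complex.ofReal_div, Complex.ofReal_add, add_mul,
    Complex.exp_add]
  have hy' : (sin (a + x) : ℂ) ≠ 0 := Complex.ofReal_ne_zero.2 hy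
  field_simp

theorem exp_mul_gaussBinom_eq_sinBinom (β : ℝ) (K k : ℕ) (hk : k ≤ K + 1)
    (hsin : ∀ i < k, sin ((i + 1) * β) ≠ 0) :
    cexp (2 * β * I) ^ k.choose 2 * cexp (-(K * β) * I) ^ k *
        gaussBinom (cexp (2 * β * I)) (K + 1) k = sinBinom β (K + 1) k := by
  have hfactor : ∀ i ∈ range k, cexp (2 * β * I) ^ i * cexp (-(K * β) * I) *
      (1 - cexp (2 * β * I) ^ (K + 1 - i)) =
      ((sin ((↑(K + 1) - i) * β) / sin ((i + 1) * β) : ℝ) : ℂ) *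
        (1 - cexp (2 * β * I) ^ (i + 1)) := by
    intro i hi
    have hik : i ≤ K + 1 := by simp at hi; omega
    have hphase : cexp (2 * β * I) ^ i * cexp (-(K * β) * I) = cexp (↑((2 * i - K) * β) * I) := by
      rw [exp_two_mul_I_pow, ← Complex.exp_add]; congr 1; push_cast; ring
    rw [hphase, exp_two_mul_I_pow, exp_two_mul_I_pow, Nat.cast_sub hik]
    simp only [Nat.cast_add, Nat.cast_one]
    exact exp_mul_one_sub_exp_eq (by exact_mod_cast hsin i (mem_range.1 hi)) (by ring)
  have hD : ∏ i ∈ range k, (1 - cexp (2 * β * I) ^ (i + 1)) ≠ 0 := by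
    refine prod_ne_zero_iff.2 fun i hi ↦ ?_
    rw [exp_two_mul_I_pow, one_sub_exp_two_mul_I]
    refine mul_ne_zero (by simp [Complex.exp_ne_zero]) (Complex.ofReal_ne_zero.2 ?_)
    exact_mod_cast hsin i (mem_range.1 hi)
  apply mul_right_cancel₀ hD
  rw [mul_assoc, gaussBinom_mul_prod_one_sub_pow, sinBinom, Complex.ofReal_prod, ← prod_mul_distrib,
    ← prod_congr rfl hfactor, prod_mul_distrib, prod_mul_distrib, prod_const, card_range,
    prod_pow_eq_pow_sum, sum_range_id, Nat.choose_two_right]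

theorem prod_one_add_exp_mul_eq_sum_sinBinom (β : ℝ) (K : ℕ)
    (hsin : ∀ i ≤ K, sin ((i + 1) * β) ≠ 0) (t : ℂ) :
    ∏ j ∈ range (K + 1), (1 + cexp ((2 * j - K) * β * I) * t) =
      ∑ k ∈ range (K + 2), (sinBinom β (K + 1) k : ℂ) * t ^ k := by
  have hpoint : ∀ j : ℕ, cexp ((2 * j - K) * β * I) * t =
      cexp (2 * β * I) ^ j * (cexp (-(K * β) * I) * t) := by
    intro j
    rw [← mul_assoc, ← Complex.exp_nat_mul, ← Complex.exp_add]
    ring_nf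
  simp only [hpoint, prod_one_add_pow_mul]
  refine sum_congr rfl fun k hk ↦ ?_
  have hk : k ≤ K + 1 := Nat.lt_succ_iff.1 (mem_range.1 hk)
  rw [← exp_mul_gaussBinom_eq_sinBinom β K k hk fun i hi ↦ hsin i (by omega)]
  ring

theorem sum_sinBinom_mul_neg_exp_pow_eq_zero (β : ℝ) (K : ℕ)
    (hsin : ∀ i ≤ K, sin ((i + 1) * β) ≠ 0) {j : ℕ} (hj : j ≤ K) :
    ∑ k ∈ range (K + 2), (sinBinom β (K + 1) k : ℂ) * (-cexp ((2 * j - K) * β * I)) ^ k = 0 := by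
  rw [← prod_one_add_exp_mul_eq_sum_sinBinom β K hsin]
  refine prod_eq_zero (i := K - j) (mem_range.2 (by omega)) ?_
  rw [mul_neg, ← Complex.exp_add, Nat.cast_sub hj]
  ring_nf
  simp

theorem exists_exp_two_pi_mul_div_eq_neg_exp {N K b j : ℕ} (hj : j ≤ K) {lam : ℤ}
    (hlam : |lam| = N + j * b) {D : ℝ} (hD : D = b * K + 2 * N) (hD0 : D ≠ 0) :
    ∃ i ≤ K, cexp (2 * π * I * lam / D) = -cexp ((2 * i - K) * ↑(π * b / D) * I) := by
  subst hD
  have hDc : ((b * K + 2 * N : ℝ) : ℂ) ≠ 0 := Complex.ofReal_ne_zero.2 hD0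
  push_cast at hDc
  rcases le_or_gt 0 lam with hnonneg | hneg
  · have hlam' : (lam : ℂ) = N + j * b := by
      rw [abs_of_nonneg hnonneg] at hlam; exact_mod_cast hlam
    refine ⟨j, hj, ?_⟩
    rw [← neg_one_mul, ← Complex.exp_pi_mul_I, ← Complex.exp_add]
    congr 1
    push_cast
    field_simp
    rw [hlam']
    ring
  · have hlam' : (lam : ℂ) = -(N + j * b) := by
      rw [abs_of_neg hneg] at hlam; rw [← neg_neg lam, hlam]; push_cast; ring
    refine ⟨K - j, Nat.sub_le K j, ?_⟩
    rw [← neg_one_mul, ← Complex.exp_neg_pi_mul_I, ← Complex.exp_add, Nat.cast_sub hj]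
    congr 1
    push_cast
    field_simp
    rw [hlam']
    ring

theorem nat_succ_mul_pi_mul_div_lt_pi {N K b : ℕ} (hbN : b < 2 * N) :
    ((K + 1 : ℕ) : ℝ) * (π * b / (b * K + 2 * N)) < π := by
  have hbN' : (b : ℝ) < 2 * N := by exact_mod_cast hbN
  have hD : (0 : ℝ) < b * K + 2 * N := by linarith [show (0 : ℝ) ≤ b * K by positivity]
  calc ((K + 1 : ℕ) : ℝ) * (π * b / (b * K + 2 * N)) = π * ((K + 1) * b / (b * K + 2 * N)) := by
        push_cast; ring
    _ < π := mul_lt_of_lt_one_right pi_pos ((div_lt_one hD).2 (by linarith))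

theorem sum_mul_trigPoly_sample_eq_zero (S : Finset ℤ) (c : ℤ → ℂ) (a : ℕ → ℂ) (M : ℕ) (D u : ℝ)
    (h : ∀ lam ∈ S, ∑ m ∈ range M, a m * cexp (2 * π * I * lam / D) ^ m = 0) :
    ∑ m ∈ range M, a m * ∑ lam ∈ S, c lam * cexp (2 * π * I * lam * ↑(u + m / D)) = 0 := by
  have hsplit : ∀ (lam : ℤ) (m : ℕ), cexp (2 * π * I * lam * ↑(u + m / D)) =
      cexp (2 * π * I * lam * u) * cexp (2 * π * I * lam / D) ^ m := by
    intro lam m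
    rw [← Complex.exp_nat_mul, ← Complex.exp_add]
    push_cast
    ring_nf
  simp only [hsplit, mul_sum]
  rw [sum_comm]
  refine sum_eq_zero fun lam hlam ↦ ?_
  rw [← mul_zero (c lam * cexp (2 * π * I * lam * u)), ← h lam hlam, mul_sum]
  exact sum_congr rfl fun m _ ↦ by ring

theorem length_le_of_pos_arith_prog_general
    (N K b : ℕ) (hb : 1 ≤ b) (hbN : b < 2 * N)
    (S : Finset ℤ)
    (hS : ∀ lam : ℤ, lam ∈ S ↔ ∃ j : ℕ, j ≤ K ∧ |lam| = (N : ℤ) + j * b)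
    (c : ℤ → ℂ) (f : ℝ → ℂ)
    (hf : ∀ t : ℝ, f t = ∑ lam ∈ S,
      c lam * Complex.exp (2 * Real.pi * Complex.I * (lam : ℂ) * (t : ℂ)))
    (u v : ℝ)
    (hpos : ∀ t ∈ Set.Icc u v, 0 < (f t).re) :
    v - u ≤ ((K : ℝ) + 1) / (b * K + 2 * N) := by
  by_contra! hlen
  set D : ℝ := b * K + 2 * N with hD
  set β : ℝ := π * b / D
  have hDpos : 0 < D := by
    have : (0 : ℝ) < N := by exact_mod_cast (by omega : 0 < N)
    positivity
  have hβ : 0 < β := by positivity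
  have hKβ : (K + 1 : ℕ) * β < π := nat_succ_mul_pi_mul_div_lt_pi hbN
  have hsin : ∀ i ≤ K, sin ((i + 1) * β) ≠ 0 := fun i hi ↦
    (sin_mul_pos hβ hKβ (by positivity) (by push_cast; exact_mod_cast Nat.succ_le_succ hi)).ne'
  have hsum : ∑ m ∈ range (K + 2), (sinBinom β (K + 1) m : ℂ) * f (u + m / D) = 0 := by
    simp only [hf]
    refine sum_mul_trigPoly_sample_eq_zero S c _ _ D u fun lam hlam ↦ ?_
    obtain ⟨j, hj, hlam⟩ := (hS lam).1 hlam
    obtain ⟨i, hi, hroot⟩ :=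
      exists_exp_two_pi_mul_div_eq_neg_exp hj (by exact_mod_cast hlam) hD hDpos.ne'
    rw [hroot]
    exact sum_sinBinom_mul_neg_exp_pow_eq_zero β K hsin hi
  have hsample : ∀ m ∈ range (K + 2), u + m / D ∈ Set.Icc u v := fun m hm ↦ by
    have : (m : ℝ) ≤ K + 1 := by exact_mod_cast Nat.lt_succ_iff.1 (mem_range.1 hm)
    exact ⟨le_add_of_nonneg_right (by positivity),
      by linarith [div_le_div_of_nonneg_right this hDpos.le]⟩
  have hre := congrArg Complex.re hsum
  rw [Complex.re_sum, Complex.zero_re] at hre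
  refine (sum_pos (fun m hm ↦ ?_) nonempty_range_add_one).ne' hre
  rw [Complex.re_ofReal_mul]
  exact mul_pos (sinBinom_pos hβ hKβ (Nat.lt_succ_iff.1 (mem_range.1 hm))) (hpos _ (hsample m hm))

/-- Upper bound in **Theorem 3** (Kozma–Oravecz): if a real trigonometric polynomial
with spectrum in `S = {λ ∈ ℤ : |λ| = N + jb, 0 ≤ j ≤ K}` (where `b < 2N`) is strictly
positive on an interval `[u, v]`, then `v - u ≤ (K+1)/(bK+2N)`. -/
theorem length_le_of_pos_arith_prog
    (N K b : ℕ) (hN : 1 ≤ N) (hb : 1 ≤ b) (hbN : b < 2 * N)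
    (S : Finset ℤ)
    (hS : ∀ lam : ℤ, lam ∈ S ↔ ∃ j : ℕ, j ≤ K ∧ |lam| = (N : ℤ) + j * b)
    (c : ℤ → ℂ) (f : ℝ → ℂ)
    (hf : ∀ t : ℝ, f t = ∑ lam ∈ S,
      c lam * Complex.exp (2 * Real.pi * Complex.I * (lam : ℂ) * (t : ℂ)))
    (hreal : ∀ t : ℝ, (f t).im = 0)
    (u v : ℝ) (huv : u ≤ v)
    (hpos : ∀ t ∈ Set.Icc u v, 0 < (f t).re) :
    v - u ≤ ((K : ℝ) + 1) / (b * K + 2 * N) :=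
  length_le_of_pos_arith_prog_general N K b hb hbN S hS c f hf u v hpos
end

section
/- Let N, K, b be integers with N ≥ 1, K ≥ 0, b ≥ 1 and b < 2N, and let S = {λ ∈ ℤ : |λ| = N + jb for some 0 ≤ j ≤ K}. Then for every ε > 0 there exists a real trigonometric polynomial f with spectrum contained in S and an interval I ⊆ [0,1] of length |I| ≥ (K+1)/(bK+2N) − ε such that f(t) > 0 for every t ∈ I. -/
/-!
Put `M = bK + 2N`, `β = b / M` and `F y = sin (π y) * ∏_{j=1}^{K} sin (π β (j - y))`.
Expanding the sines into exponentials, `t ↦ F (M (t - s))` equals `2 Re (e(Nt) Q(e(bt)))` for a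
polynomial `Q` of degree `≤ K` (`e(x) = exp (2πix)`), so it is a real trigonometric polynomial with
spectrum in `S`. On `[0, K + 1]` both `sin (π y)` and the product have sign `(-1)^⌊y⌋`, so `F ≥ 0`
there, with zeros only at integers. Adding the copy of `F(Mt)` shifted by `h < 1/M` removes the
common zeros, and the sum is positive on `[h, (K + 1)/M]`.
-/

open Finset Polynomial

open scoped ComplexConjugate

section Positivity

open Real

noncomputable def sinProd (β : ℝ) (K : ℕ) (y : ℝ) : ℝ :=
  sin (π * y) * ∏ j ∈ range K, sin (π * (β * (j + 1 - y)))

lemma sin_pi_mul_pos {x : ℝ} (h0 : 0 < x) (h1 : x < 1) : 0 < sin (π * x) :=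
  sin_pos_of_pos_of_lt_pi (by positivity) (by nlinarith [pi_pos])

variable {β : ℝ} {K : ℕ}

lemma sinProd_intCast (m : ℤ) : sinProd β K m = 0 := by
  rw [sinProd, mul_comm π, sin_int_mul_pi, zero_mul]

lemma sinProd_pos (hβ : 0 < β) (hβK : β * K ≤ 1) {y : ℝ} (hy0 : 0 ≤ y) (hyK : y ≤ K + 1)
    (hy : ∀ m : ℤ, y ≠ m) : 0 < sinProd β K y := by
  set k := ⌊y⌋₊
  have hky : (k : ℝ) < y :=
    (Nat.floor_le hy0).lt_of_ne fun h => hy k (by rw [← h, Int.cast_natCast])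
  have hyk : y < k + 1 := Nat.lt_floor_add_one y
  have hyK' : y < K + 1 := hyK.lt_of_ne fun h => hy (K + 1) (by rw [h]; push_cast; rfl)
  have hkK : k ≤ K := Nat.le_of_lt_succ <| (Nat.floor_lt hy0).2 (by push_cast; linarith)
  have hsin : sin (π * y) = (-1) ^ k * sin (π * (y - k)) := by
    rw [← sin_add_nat_mul_pi]; ring_nf
  set f : ℕ → ℝ := fun j => sin (π * (β * (j + 1 - y)))
  -- the factors with `j + 1 ≤ ⌊y⌋` are negative, the others positive
  have hlow : ∀ j ∈ range k, 0 < -f j := by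
    intro j hj
    have hj : (j : ℝ) + 1 ≤ k := by exact_mod_cast mem_range.1 hj
    rw [← sin_neg, ← mul_neg, ← mul_neg]
    exact sin_pi_mul_pos (by nlinarith) (by nlinarith)
  have hhigh : ∀ i ∈ range (K - k), 0 < f (k + i) := by
    intro i hi
    have hi : ((k + i : ℕ) : ℝ) + 1 ≤ K := by exact_mod_cast (by grind : k + i + 1 ≤ K)
    have hki : (k : ℝ) ≤ (k + i : ℕ) := by exact_mod_cast k.le_add_right i
    exact sin_pi_mul_pos (by nlinarith) (by nlinarith)
  set P := (∏ j ∈ range k, -f j) * ∏ i ∈ range (K - k), f (k + i)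
  have hsign : ((-1 : ℝ) ^ k) * (-1) ^ k = 1 := by rw [← mul_pow]; norm_num
  have hsplit : ∏ j ∈ range K, f j = (-1) ^ k * P := by
    have h := prod_range_add f k (K - k)
    rw [Nat.add_sub_cancel' hkK] at h
    simp only [P]
    rw [h, prod_neg, card_range, ← mul_assoc, ← mul_assoc, hsign, one_mul]
  have hpos : 0 < sin (π * (y - k)) * P :=
    mul_pos (sin_pi_mul_pos (by linarith) (by linarith)) (mul_pos (prod_pos hlow) (prod_pos hhigh))
  rw [sinProd, hsin, hsplit]
  linear_combination hpos - (sin (π * (y - k)) * P) * hsign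

lemma sinProd_nonneg (hβ : 0 < β) (hβK : β * K ≤ 1) {y : ℝ} (hy0 : 0 ≤ y) (hyK : y ≤ K + 1) :
    0 ≤ sinProd β K y := by
  by_cases hy : ∃ m : ℤ, y = m
  · obtain ⟨m, rfl⟩ := hy
    rw [sinProd_intCast]
  · exact (sinProd_pos hβ hβK hy0 hyK (not_exists.1 hy)).le

lemma sinProd_add_sinProd_sub_pos (hβ : 0 < β) (hβK : β * K ≤ 1) {η y : ℝ} (hη0 : 0 < η)
    (hη1 : η < 1) (hηy : η ≤ y) (hyK : y ≤ K + 1) :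
    0 < sinProd β K y + sinProd β K (y - η) := by
  have hy0 : 0 ≤ y := by linarith
  by_cases hy : ∃ m : ℤ, y = m
  · obtain ⟨m, rfl⟩ := hy
    -- the zeros of `sinProd` are integers, and `y` and `y - η` cannot both be
    have hyη : ∀ m' : ℤ, (m : ℝ) - η ≠ m' := by
      intro m' h
      have h0 : ((0 : ℤ) : ℝ) < ((m - m' : ℤ) : ℝ) := by push_cast; linarith
      have h1 : ((m - m' : ℤ) : ℝ) < ((1 : ℤ) : ℝ) := by push_cast; linarith
      have := Int.cast_lt.1 h0
      have := Int.cast_lt.1 h1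
      omega
    rw [sinProd_intCast, zero_add]
    exact sinProd_pos hβ hβK (by linarith) (by linarith) hyη
  · exact add_pos_of_pos_of_nonneg (sinProd_pos hβ hβK hy0 hyK (not_exists.1 hy))
      (sinProd_nonneg hβ hβK (by linarith) (by linarith))

end Positivity

section TrigPolynomial

open Complex

lemma sum_eq_sum_range_add_neg {S : Finset ℤ} {K : ℕ} {p : ℕ → ℤ} (hp : Function.Injective p)
    (hp0 : ∀ j, 0 < p j) (hS : ∀ lam, lam ∈ S ↔ ∃ j ≤ K, |lam| = p j) {A : Type*}
    [AddCommMonoid A] (g : ℤ → A) :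
    ∑ lam ∈ S, g lam = ∑ j ∈ range (K + 1), (g (p j) + g (-p j)) := by
  have hneg : Function.Injective fun j => -p j := neg_injective.comp hp
  have hS' : S = (range (K + 1)).image p ∪ (range (K + 1)).image (fun j => -p j) := by
    ext lam
    simp only [hS, mem_union, mem_image, mem_range, Nat.lt_succ_iff]
    constructor
    · rintro ⟨j, hj, h⟩
      rcases abs_eq (hp0 j).le |>.1 h with h | h
      exacts [.inl ⟨j, hj, h.symm⟩, .inr ⟨j, hj, h.symm⟩]
    · rintro (⟨j, hj, rfl⟩ | ⟨j, hj, rfl⟩)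
      exacts [⟨j, hj, abs_of_pos (hp0 j)⟩, ⟨j, hj, by rw [abs_neg, abs_of_pos (hp0 j)]⟩]
  have hdisj : Disjoint ((range (K + 1)).image p) ((range (K + 1)).image fun j => -p j) := by
    simp only [disjoint_left, mem_image]
    rintro _ ⟨i, -, rfl⟩ ⟨j, -, h⟩
    linarith [hp0 i, hp0 j]
  rw [hS', sum_union hdisj, sum_image hp.injOn, sum_image hneg.injOn, sum_add_distrib]

noncomputable def symmCoeff (N b : ℕ) (Q : ℂ[X]) (lam : ℤ) : ℂ :=
  if 0 < lam then Q.coeff ((lam.natAbs - N) / b) else conj (Q.coeff ((lam.natAbs - N) / b))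

section SymmCoeff

variable {N b : ℕ} (Q : ℂ[X]) (j : ℕ)

lemma natAbs_sub_div_eq (hb : 0 < b) : (((N + j * b : ℕ) : ℤ).natAbs - N) / b = j := by
  rw [Int.natAbs_natCast, Nat.add_sub_cancel_left, Nat.mul_div_cancel j hb]

lemma symmCoeff_pos (hN : 0 < N) (hb : 0 < b) : symmCoeff N b Q (N + j * b : ℕ) = Q.coeff j := by
  rw [symmCoeff, if_pos (by positivity), natAbs_sub_div_eq j hb]

lemma symmCoeff_neg (hN : 0 < N) (hb : 0 < b) :
    symmCoeff N b Q (-(N + j * b : ℕ)) = conj (Q.coeff j) := by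
  rw [symmCoeff, if_neg (by simp only [Left.neg_pos_iff, not_lt]; positivity), Int.natAbs_neg,
    natAbs_sub_div_eq j hb]

end SymmCoeff

lemma sum_symmCoeff_mul_exp {N K b : ℕ} (hN : 0 < N) (hb : 0 < b) {S : Finset ℤ}
    (hS : ∀ lam : ℤ, lam ∈ S ↔ ∃ j : ℕ, j ≤ K ∧ |lam| = (N : ℤ) + j * b)
    {Q : ℂ[X]} (hQ : Q.natDegree ≤ K) (t : ℝ) :
    ∑ lam ∈ S, symmCoeff N b Q lam * exp (2 * Real.pi * I * lam * t)
      = (2 * (exp (2 * Real.pi * I * N * t) * Q.eval (exp (2 * Real.pi * I * b * t))).re : ℝ) := by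
  have hp : Function.Injective fun j : ℕ => ((N + j * b : ℕ) : ℤ) := by
    intro i j h
    simp only [Nat.cast_inj, Nat.add_left_cancel_iff] at h
    exact Nat.eq_of_mul_eq_mul_right hb h
  rw [sum_eq_sum_range_add_neg hp (fun j => by positivity) (by simpa using hS), ← add_conj,
    eval_eq_sum_range' (Nat.lt_succ_of_le hQ), mul_sum, map_sum, ← sum_add_distrib]
  refine sum_congr rfl fun j _ => ?_
  have hconj : ∀ (c : ℂ) (lam : ℤ), conj c * exp (2 * Real.pi * I * ((-lam : ℤ) : ℂ) * t)
      = conj (c * exp (2 * Real.pi * I * lam * t)) := by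
    intro c lam
    rw [map_mul, ← exp_conj]
    simp only [map_mul, conj_ofReal, conj_I, map_ofNat, map_intCast, Int.cast_neg]
    ring_nf
  have hexp : exp (2 * Real.pi * I * ((N + j * b : ℕ) : ℤ) * t)
      = exp (2 * Real.pi * I * N * t) * exp (2 * Real.pi * I * b * t) ^ j := by
    rw [← exp_nat_mul, ← exp_add]
    push_cast; ring_nf
  rw [symmCoeff_pos Q j hN hb, symmCoeff_neg Q j hN hb, hconj, hexp, mul_left_comm (Q.coeff j)]

lemma exp_mul_I_sub_exp_mul_I (x y : ℂ) :
    exp (x * I) - exp (y * I) = -2 * I * sin ((y - x) / 2) * exp ((x + y) / 2 * I) := by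
  have hx : x * I = -((y - x) / 2) * I + (x + y) / 2 * I := by ring
  have hy : y * I = (y - x) / 2 * I + (x + y) / 2 * I := by ring
  rw [hx, hy, exp_add, exp_add]
  linear_combination (I * exp ((x + y) / 2 * I)) * two_sin ((y - x) / 2)
    + ((exp (-((y - x) / 2) * I) - exp ((y - x) / 2 * I)) * exp ((x + y) / 2 * I)) * I_sq

lemma re_exp_mul_I_div_two_I (φ : ℝ) : (exp (φ * I) / (2 * I)).re = Real.sin φ / 2 := by
  rw [div_eq_mul_inv, mul_inv, inv_I]
  simp [exp_ofReal_mul_I_im, div_eq_mul_inv]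

lemma exp_mul_eval_prod_sub_exp (N b K : ℕ) (a : ℕ → ℝ) (t : ℝ) :
    exp (2 * Real.pi * I * N * t)
        * (∏ j ∈ range K, (X - C (exp (2 * Real.pi * I * b * a j)))).eval
          (exp (2 * Real.pi * I * b * t))
      = (-2 * I) ^ K * exp (Real.pi * ((2 * N + b * K) * t + b * ∑ j ∈ range K, (a j : ℂ)) * I)
        * ∏ j ∈ range K, (Real.sin (Real.pi * b * (a j - t)) : ℂ) := by
  have hfactor : ∀ j ∈ range K, exp (2 * Real.pi * I * b * t) - exp (2 * Real.pi * I * b * a j)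
      = -2 * I * Real.sin (Real.pi * b * (a j - t)) * exp (Real.pi * b * (t + a j) * I) := by
    intro j _
    rw [mul_right_comm _ I, mul_right_comm _ I, mul_right_comm _ I, mul_right_comm _ I,
      exp_mul_I_sub_exp_mul_I]
    push_cast; ring_nf
  have hphase : exp (2 * Real.pi * I * N * t) * exp (∑ j ∈ range K, Real.pi * b * (t + a j) * I)
      = exp (Real.pi * ((2 * N + b * K) * t + b * ∑ j ∈ range K, (a j : ℂ)) * I) := by
    rw [← exp_add]
    congr 1
    simp only [mul_add, add_mul, sum_add_distrib, sum_const, card_range, nsmul_eq_mul, ← sum_mul,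
      ← mul_sum]
    ring
  simp only [eval_prod, eval_sub, eval_X, eval_C]
  rw [prod_congr rfl hfactor, prod_mul_distrib, prod_mul_distrib, prod_const, card_range,
    ← exp_sum, ← hphase]
  ring

lemma exists_natDegree_le_two_re_eq_sin_mul_prod_sin (N b K : ℕ) (a : ℕ → ℝ) (θ : ℝ) :
    ∃ Q : ℂ[X], Q.natDegree ≤ K ∧ ∀ t : ℝ,
      2 * (exp (2 * Real.pi * I * N * t) * Q.eval (exp (2 * Real.pi * I * b * t))).re
        = Real.sin (Real.pi * (2 * N + b * K) * t - θ)
          * ∏ j ∈ range K, Real.sin (Real.pi * b * (a j - t)) := by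
  set P : ℂ[X] := ∏ j ∈ range K, (X - C (exp (2 * Real.pi * I * b * a j)))
  set u : ℂ :=
    (2 * I * (-2 * I) ^ K)⁻¹ * exp (-(Real.pi * b * ∑ j ∈ range K, (a j : ℂ) + θ) * I)
  refine ⟨C u * P, natDegree_C_mul_le u P |>.trans ?_, fun t => ?_⟩
  · refine natDegree_prod_le _ _ |>.trans ?_
    simp
  have hphase : exp (-(Real.pi * b * ∑ j ∈ range K, (a j : ℂ) + θ) * I)
        * exp (Real.pi * ((2 * N + b * K) * t + b * ∑ j ∈ range K, (a j : ℂ)) * I)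
      = exp ((Real.pi * (2 * N + b * K) * t - θ : ℝ) * I) := by
    rw [← exp_add]; push_cast; ring_nf
  have h : exp (2 * Real.pi * I * N * t) * (C u * P).eval (exp (2 * Real.pi * I * b * t))
      = (∏ j ∈ range K, Real.sin (Real.pi * b * (a j - t)) : ℝ)
        * (exp ((Real.pi * (2 * N + b * K) * t - θ : ℝ) * I) / (2 * I)) := by
    rw [eval_mul, eval_C, mul_left_comm, exp_mul_eval_prod_sub_exp, ← hphase, ofReal_prod]
    simp only [u]
    field_simp
  rw [h, re_ofReal_mul, re_exp_mul_I_div_two_I]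
  ring

lemma exists_natDegree_le_two_re_eq_sinProd (N b K : ℕ) (hM : (b * K + 2 * N : ℝ) ≠ 0)
    (s : ℝ) : ∃ Q : ℂ[X], Q.natDegree ≤ K ∧ ∀ t : ℝ,
      2 * (exp (2 * Real.pi * I * N * t) * Q.eval (exp (2 * Real.pi * I * b * t))).re
        = sinProd (b / (b * K + 2 * N)) K ((b * K + 2 * N) * (t - s)) := by
  set M : ℝ := b * K + 2 * N
  obtain ⟨Q, hQ, hF⟩ :=
    exists_natDegree_le_two_re_eq_sin_mul_prod_sin N b K (fun j => (j + 1) / M + s)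
      (Real.pi * M * s)
  refine ⟨Q, hQ, fun t => ?_⟩
  rw [hF, sinProd]
  congr 1
  · simp only [M]; ring_nf
  · refine prod_congr rfl fun j _ => ?_
    congr 1
    field_simp
    ring

end TrigPolynomial

theorem exists_pos_on_long_interval_general
    (N K b : ℕ) (hN : 1 ≤ N) (hb : 1 ≤ b)
    (S : Finset ℤ)
    (hS : ∀ lam : ℤ, lam ∈ S ↔ ∃ j : ℕ, j ≤ K ∧ |lam| = (N : ℤ) + j * b)
    (ε : ℝ) (hε : 0 < ε) :
    ∃ (c : ℤ → ℂ) (u v : ℝ), 0 ≤ u ∧ u ≤ v ∧ v ≤ 1 ∧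
      ((K : ℝ) + 1) / (b * K + 2 * N) - ε ≤ v - u ∧
      (∀ t : ℝ, (∑ lam ∈ S,
        c lam * Complex.exp (2 * Real.pi * Complex.I * (lam : ℂ) * (t : ℂ))).im = 0) ∧
      (∀ t ∈ Set.Icc u v, 0 < (∑ lam ∈ S,
        c lam * Complex.exp (2 * Real.pi * Complex.I * (lam : ℂ) * (t : ℂ))).re) := by
  set M : ℝ := b * K + 2 * N
  have hbR : (1 : ℝ) ≤ b := by exact_mod_cast hb
  have hNR : (1 : ℝ) ≤ N := by exact_mod_cast hN
  have hM : 0 < M := by positivity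
  have hβ : 0 < b / M := by positivity
  have hβK : b / M * K ≤ 1 := by rw [div_mul_eq_mul_div, div_le_one hM]; linarith
  have hKM : (K : ℝ) + 1 ≤ M := by nlinarith
  set h := min ε (1 / (2 * M))
  have hh0 : 0 < h := lt_min hε (by positivity)
  have hhM : M * h < 1 := by
    have := min_le_right ε (1 / (2 * M))
    rw [le_div_iff₀ (by positivity)] at this
    linarith
  obtain ⟨Q₀, hQ₀, hF₀⟩ := exists_natDegree_le_two_re_eq_sinProd N b K hM.ne' 0
  obtain ⟨Q₁, hQ₁, hF₁⟩ := exists_natDegree_le_two_re_eq_sinProd N b K hM.ne' h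
  have hf : ∀ t : ℝ, ∑ lam ∈ S, symmCoeff N b (Q₀ + Q₁) lam
        * Complex.exp (2 * Real.pi * Complex.I * lam * t)
      = (sinProd (b / M) K (M * t) + sinProd (b / M) K (M * t - M * h) : ℝ) := by
    intro t
    rw [sum_symmCoeff_mul_exp hN hb hS (natDegree_add_le_of_degree_le hQ₀ hQ₁), eval_add, mul_add,
      Complex.add_re, mul_add, hF₀, hF₁, sub_zero, mul_sub]
  refine ⟨symmCoeff N b (Q₀ + Q₁), h, (K + 1) / M, hh0.le, ?_, (div_le_one hM).2 hKM, ?_,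
    fun t => by rw [hf, Complex.ofReal_im], fun t ht => ?_⟩
  · rw [le_div_iff₀ hM]; linarith
  · linarith [min_le_left ε (1 / (2 * M))]
  · rw [hf, Complex.ofReal_re]
    have hMt : M * t ≤ K + 1 := by rw [← le_div_iff₀' hM]; exact ht.2
    exact sinProd_add_sinProd_sub_pos hβ hβK (by positivity) (by linarith)
      (mul_le_mul_of_nonneg_left ht.1 hM.le) hMt

/-- Lower bound in **Theorem 3** (Kozma–Oravecz): for every `ε > 0` there is a real
trigonometric polynomial with spectrum in `S = {λ ∈ ℤ : |λ| = N + jb, 0 ≤ j ≤ K}`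
(where `b < 2N`) which is strictly positive on an interval `I ⊆ [0,1]` of length at
least `(K+1)/(bK+2N) - ε`. -/
theorem exists_pos_on_long_interval
    (N K b : ℕ) (hN : 1 ≤ N) (hb : 1 ≤ b) (hbN : b < 2 * N)
    (S : Finset ℤ)
    (hS : ∀ lam : ℤ, lam ∈ S ↔ ∃ j : ℕ, j ≤ K ∧ |lam| = (N : ℤ) + j * b)
    (ε : ℝ) (hε : 0 < ε) :
    ∃ (c : ℤ → ℂ) (u v : ℝ), 0 ≤ u ∧ u ≤ v ∧ v ≤ 1 ∧
      ((K : ℝ) + 1) / (b * K + 2 * N) - ε ≤ v - u ∧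
      (∀ t : ℝ, (∑ lam ∈ S,
        c lam * Complex.exp (2 * Real.pi * Complex.I * (lam : ℂ) * (t : ℂ))).im = 0) ∧
      (∀ t ∈ Set.Icc u v, 0 < (∑ lam ∈ S,
        c lam * Complex.exp (2 * Real.pi * Complex.I * (lam : ℂ) * (t : ℂ))).re) :=
  exists_pos_on_long_interval_general N K b hN hb S hS ε hε
end

section
/- Let N, K, b be integers with N ≥ 1, K ≥ 0, b ≥ 1 and b < 2N. Set η = 1/(bK+2N), a = (K+1)·η, τ = exp(2πiη), and Q(z) = c·∏_{j=1}^{K}(z^b − τ^{jb}) where the constant c ∈ ℂ is chosen so that Q(1) = −i. Define f(t) = Re( exp(2πiNt)·Q(exp(2πit)) ). Then f is a real trigonometric polynomial with spectrum contained in S = {λ ∈ ℤ : |λ| = N + jb for some 0 ≤ j ≤ K}, f(t) ≥ 0 for every t ∈ [0,a], and for t ∈ [0,a] one has f(t) = 0 if and only if t ∈ {0, η, 2η, …, Kη, (K+1)η}. -/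
/-!
Write `𝐞 x = exp(2πix)`. Every factor of `Q(𝐞 t)` splits as
`𝐞(bt) - 𝐞(bjη) = 2i · 𝐞(b(t + jη)/2) · sin(πb(t - jη))`, so
`𝐞(Nt) Q(𝐞 t) = C · 𝐞(t/(2η)) · P(t)` for a constant `C` and the real product
`P(t) = ∏_{j=1}^K sin(πb(t - jη))`, because `bK + 2N = 1/η`. The normalisation `Q(1) = -i`
forces `C = -i/P(0)`, hence `f(t) = sin(πt/η) · P(t)/P(0)`. Since `bKη < 1`, on
`(mη, (m+1)η)` the sine has sign `(-1)^m` and exactly `K - m` factors of `P(t)` are negative,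
while all `K` factors of `P(0)` are: so `f > 0` between consecutive nodes `jη` and `f` vanishes
at the nodes. Expanding the product shows that `𝐞(Nt) Q(𝐞 t)` only has frequencies
`N + kb` with `k ≤ K`; taking the real part adds their negatives.
-/

open Finset Complex
open scoped Real ComplexConjugate

noncomputable def expTwoPiI (x : ℝ) : ℂ := Complex.exp (2 * π * I * x)

local notation "𝐞" => expTwoPiI

@[simp]
lemma expTwoPiI_zero : 𝐞 0 = 1 := by simp [expTwoPiI]

lemma expTwoPiI_add (x y : ℝ) : 𝐞 (x + y) = 𝐞 x * 𝐞 y := by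
  simp only [expTwoPiI, ofReal_add, mul_add, Complex.exp_add]

lemma expTwoPiI_pow (x : ℝ) (n : ℕ) : 𝐞 x ^ n = 𝐞 (n * x) := by
  rw [expTwoPiI, expTwoPiI, ← Complex.exp_nat_mul]
  push_cast
  ring_nf

lemma prod_expTwoPiI {ι : Type*} (s : Finset ι) (x : ι → ℝ) :
    ∏ j ∈ s, 𝐞 (x j) = 𝐞 (∑ j ∈ s, x j) := by
  simp only [expTwoPiI, ofReal_sum, mul_sum, Complex.exp_sum]

lemma conj_expTwoPiI (x : ℝ) : conj (𝐞 x) = 𝐞 (-x) := by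
  rw [expTwoPiI, expTwoPiI, ← Complex.exp_conj]
  simp [map_ofNat]

lemma expTwoPiI_eq (x : ℝ) : 𝐞 x = Real.cos (2 * π * x) + Real.sin (2 * π * x) * I := by
  rw [expTwoPiI, show (2 * π * I * x : ℂ) = ((2 * π * x : ℝ) : ℂ) * I by push_cast; ring,
    Complex.exp_mul_I, ← ofReal_cos, ← ofReal_sin]

lemma expTwoPiI_sub_expTwoPiI (x y : ℝ) :
    𝐞 x - 𝐞 y = 2 * I * 𝐞 ((x + y) / 2) * Real.sin (π * (x - y)) := by
  have key (m d : ℝ) : 𝐞 (m + d) - 𝐞 (m + -d) = 2 * I * 𝐞 m * Real.sin (2 * π * d) := by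
    rw [expTwoPiI_add, expTwoPiI_add, expTwoPiI_eq d, expTwoPiI_eq (-d), mul_neg, Real.cos_neg,
      Real.sin_neg]
    push_cast
    ring
  convert key ((x + y) / 2) ((x - y) / 2) using 3 <;> ring_nf

lemma prod_expTwoPiI_sub_expTwoPiI {ι : Type*} (s : Finset ι) (x : ι → ℝ) (t : ℝ) :
    ∏ j ∈ s, (𝐞 t - 𝐞 (x j)) =
      (2 * I) ^ #s * 𝐞 ((#s * t + ∑ j ∈ s, x j) / 2) *
        ∏ j ∈ s, (Real.sin (π * (t - x j)) : ℂ) := by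
  simp_rw [expTwoPiI_sub_expTwoPiI, prod_mul_distrib, prod_const, mul_pow, prod_expTwoPiI,
    ← sum_div, sum_add_distrib, sum_const, nsmul_eq_mul]

lemma re_mul_expTwoPiI_mul_ofReal {C : ℂ} {p₀ : ℝ} (h : C * p₀ = -I) (θ p : ℝ) :
    (C * 𝐞 θ * p).re = Real.sin (2 * π * θ) * p / p₀ := by
  have hp₀ : (p₀ : ℂ) ≠ 0 := by rintro h0; simp [h0] at h
  rw [eq_div_of_mul_eq hp₀ h, expTwoPiI_eq]
  simp only [div_eq_mul_inv, ← ofReal_inv, mul_re, mul_im, add_re, add_im, neg_re, neg_im,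
    ofReal_re, ofReal_im, I_re, I_im]
  ring

def HasSpectrumIn (g : ℝ → ℂ) (S : Finset ℤ) : Prop :=
  ∃ co : ℤ → ℂ, ∀ t, g t = ∑ lam ∈ S, co lam * 𝐞 (lam * t)

namespace HasSpectrumIn

variable {S : Finset ℤ} {g g₁ g₂ : ℝ → ℂ}

lemma zero : HasSpectrumIn 0 S := ⟨0, by simp⟩

lemma expTwoPiI_mul {lam : ℤ} (hlam : lam ∈ S) : HasSpectrumIn (fun t => 𝐞 (lam * t)) S :=
  ⟨fun μ => if μ = lam then 1 else 0, by simp [ite_mul, hlam]⟩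

lemma add (h₁ : HasSpectrumIn g₁ S) (h₂ : HasSpectrumIn g₂ S) :
    HasSpectrumIn (g₁ + g₂) S := by
  obtain ⟨co₁, hco₁⟩ := h₁
  obtain ⟨co₂, hco₂⟩ := h₂
  exact ⟨co₁ + co₂, fun t => by simp [hco₁, hco₂, add_mul, sum_add_distrib]⟩

lemma const_mul (C : ℂ) (h : HasSpectrumIn g S) : HasSpectrumIn (fun t => C * g t) S := by
  obtain ⟨co, hco⟩ := h
  exact ⟨fun lam => C * co lam, fun t => by simp [hco, mul_sum, mul_assoc]⟩

lemma sum {ι : Type*} (s : Finset ι) {F : ι → ℝ → ℂ}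
    (h : ∀ i ∈ s, HasSpectrumIn (F i) S) :
    HasSpectrumIn (∑ i ∈ s, F i) S :=
  sum_induction F (HasSpectrumIn · S) (fun _ _ => add) zero h

lemma star (hS : ∀ lam ∈ S, -lam ∈ S) (h : HasSpectrumIn g S) :
    HasSpectrumIn (fun t => star (g t)) S := by
  obtain ⟨co, hco⟩ := h
  refine ⟨fun lam => conj (co (-lam)), fun t => ?_⟩
  simp only [hco, star_sum, star_mul', Complex.star_def, conj_expTwoPiI]
  refine sum_nbij' (fun lam => -lam) (fun lam => -lam) (fun lam hlam => hS lam hlam)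
    (fun lam hlam => hS lam hlam) (fun _ _ => neg_neg _) (fun _ _ => neg_neg _) fun lam _ => ?_
  rw [neg_neg]
  push_cast
  ring_nf

lemma re (hS : ∀ lam ∈ S, -lam ∈ S) (h : HasSpectrumIn g S) :
    HasSpectrumIn (fun t => ((g t).re : ℂ)) S := by
  simp_rw [Complex.re_eq_add_conj, div_eq_inv_mul, ← Complex.star_def]
  exact const_mul _ (h.add (h.star hS))

end HasSpectrumIn

lemma hasSpectrumIn_expTwoPiI_mul_prod_pow_sub {ι : Type*} (N : ℤ) (b : ℕ) (s : Finset ι)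
    (w : ι → ℂ) {S : Finset ℤ} (hS : ∀ k ≤ #s, N + k * b ∈ S) :
    HasSpectrumIn (fun t => 𝐞 (N * t) * ∏ j ∈ s, (𝐞 t ^ b - w j)) S := by
  classical
  have hexpand : (fun t => 𝐞 (N * t) * ∏ j ∈ s, (𝐞 t ^ b - w j)) =
      ∑ T ∈ s.powerset, fun t => (∏ j ∈ s \ T, -w j) * 𝐞 ((N + #T * b : ℤ) * t) := by
    funext t
    simp_rw [sub_eq_add_neg, prod_add, mul_sum, Finset.sum_apply, prod_const, ← pow_mul,
      expTwoPiI_pow]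
    refine sum_congr rfl fun T _ => ?_
    rw [← mul_assoc, ← expTwoPiI_add, mul_comm]
    congr 2
    push_cast
    ring
  rw [hexpand]
  exact HasSpectrumIn.sum _ fun T hT =>
    (HasSpectrumIn.expTwoPiI_mul (hS _ (card_le_card (mem_powerset.1 hT)))).const_mul _

lemma hasSpectrumIn_re_expTwoPiI_mul_prod_pow_sub (N K b : ℕ) (c : ℂ) (w : ℕ → ℂ)
    {S : Finset ℤ} (hS : ∀ lam : ℤ, lam ∈ S ↔ ∃ j ≤ K, |lam| = (N : ℤ) + j * b) :
    HasSpectrumIn (fun t => ((𝐞 (N * t) * (c * ∏ j ∈ Icc 1 K, (𝐞 t ^ b - w j))).re : ℂ))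
      S := by
  have hSneg : ∀ lam ∈ S, -lam ∈ S := fun lam hlam => by
    rw [hS] at hlam ⊢
    simpa only [abs_neg] using hlam
  have hSpos : ∀ k ≤ #(Icc 1 K), (N : ℤ) + k * b ∈ S := fun k hk =>
    (hS _).2 ⟨k, by simpa using hk, abs_of_nonneg (by positivity)⟩
  convert ((hasSpectrumIn_expTwoPiI_mul_prod_pow_sub N b (Icc 1 K) w hSpos).const_mul c).re hSneg
    using 4
  push_cast
  ring

lemma Real.sin_pi_mul_pos {x : ℝ} (h₀ : 0 < x) (h₁ : x < 1) : 0 < Real.sin (π * x) :=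
  Real.sin_pos_of_pos_of_lt_pi (by positivity) (by nlinarith [Real.pi_pos])

lemma sin_pi_mul_nat_mul_div {η : ℝ} (hη : η ≠ 0) (j : ℕ) :
    Real.sin (π * (j * η / η)) = 0 := by
  rw [mul_div_cancel_right₀ _ hη, mul_comm π, Real.sin_nat_mul_pi]

lemma neg_one_pow_mul_sin_pi_mul_pos {m : ℕ} {x : ℝ} (h₁ : m < x) (h₂ : x < m + 1) :
    0 < (-1) ^ m * Real.sin (π * x) := by
  have hshift : π * x = π * (x - m) + m * π := by ring
  rw [hshift, Real.sin_add_nat_mul_pi, ← mul_assoc, ← pow_add, Even.neg_one_pow ⟨m, rfl⟩,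
    one_mul]
  exact Real.sin_pi_mul_pos (by linarith) (by linarith)

lemma neg_one_pow_card_filter_mul_prod_sin_pos {ι : Type*} {s : Finset ι} {x : ι → ℝ}
    {β t : ℝ} (hβ : 0 < β) (h : ∀ j ∈ s, t ≠ x j ∧ β * |t - x j| < 1) :
    0 < (-1) ^ #{j ∈ s | t < x j} * ∏ j ∈ s, Real.sin (π * β * (t - x j)) := by
  rw [← prod_const, prod_filter, ← prod_mul_distrib]
  refine prod_pos fun j hj => ?_
  obtain ⟨hne, hdist⟩ := h j hj
  split_ifs with hlt
  · rw [neg_one_mul, ← Real.sin_neg, show -(π * β * (t - x j)) = π * (β * (x j - t)) by ring]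
    rw [abs_sub_comm, abs_of_pos (sub_pos.2 hlt)] at hdist
    exact Real.sin_pi_mul_pos (mul_pos hβ (sub_pos.2 hlt)) hdist
  · have hgt : x j < t := lt_of_le_of_ne (not_lt.1 hlt) (Ne.symm hne)
    rw [abs_of_pos (sub_pos.2 hgt)] at hdist
    rw [one_mul, mul_assoc]
    exact Real.sin_pi_mul_pos (mul_pos hβ (sub_pos.2 hgt)) hdist

lemma exists_eq_nat_mul_or_mem_Ioo {K : ℕ} {η t : ℝ} (hη : 0 < η) (ht₀ : 0 ≤ t)
    (ht : t ≤ (K + 1) * η) :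
    (∃ j ≤ K + 1, t = j * η) ∨ ∃ m ≤ K, m * η < t ∧ t < (m + 1) * η := by
  set n := ⌊t / η⌋₊
  have hn : (n : ℝ) * η ≤ t := (le_div_iff₀ hη).1 (Nat.floor_le (div_nonneg ht₀ hη.le))
  have hn' : t < (n + 1) * η := (div_lt_iff₀ hη).1 (Nat.lt_floor_add_one _)
  rcases hn.eq_or_lt with h | h
  · have : (n : ℝ) ≤ K + 1 := le_of_mul_le_mul_right (h ▸ ht) hη
    exact Or.inl ⟨n, by exact_mod_cast this, h.symm⟩
  · have : (n : ℝ) < K + 1 := lt_of_mul_lt_mul_right (h.trans_le ht) hη.le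
    exact Or.inr ⟨n, by exact_mod_cast Nat.lt_succ_iff.1 (by exact_mod_cast this), h, hn'⟩

noncomputable def sinNodeProd (K : ℕ) (b η t : ℝ) : ℝ :=
  ∏ j ∈ Icc 1 K, Real.sin (π * b * (t - j * η))

lemma exists_expTwoPiI_mul_prod_pow_sub_eq (N K b : ℕ) (η : ℝ) :
    ∃ C : ℂ, ∀ t : ℝ, 𝐞 (N * t) * ∏ j ∈ Icc 1 K, (𝐞 t ^ b - 𝐞 η ^ (j * b)) =
      C * 𝐞 ((b * K + 2 * N) * t / 2) * sinNodeProd K b η t := by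
  refine ⟨(2 * I) ^ K * 𝐞 ((∑ j ∈ Icc 1 K, b * (j * η)) / 2), fun t => ?_⟩
  have hfactor (j : ℕ) : 𝐞 t ^ b - 𝐞 η ^ (j * b) = 𝐞 (b * t) - 𝐞 (b * (j * η)) := by
    rw [expTwoPiI_pow, expTwoPiI_pow]
    push_cast
    ring_nf
  have hsin :
      ∏ j ∈ Icc 1 K, (Real.sin (π * (b * t - b * (j * η))) : ℂ) = sinNodeProd K b η t := by
    rw [sinNodeProd, ofReal_prod]
    exact prod_congr rfl fun j _ => by congr 2; ring
  have hphase : 𝐞 (N * t) * 𝐞 ((K * (b * t) + ∑ j ∈ Icc 1 K, b * (j * η)) / 2) =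
      𝐞 ((∑ j ∈ Icc 1 K, b * (j * η)) / 2) * 𝐞 ((b * K + 2 * N) * t / 2) := by
    rw [← expTwoPiI_add, ← expTwoPiI_add]
    congr 1
    ring
  simp_rw [hfactor, prod_expTwoPiI_sub_expTwoPiI, Nat.card_Icc, Nat.add_sub_cancel, hsin]
  linear_combination (2 * I) ^ K * (sinNodeProd K b η t : ℂ) * hphase

lemma re_expTwoPiI_mul_prod_pow_sub (N K b : ℕ) (η : ℝ) (c : ℂ)
    (hc : c * ∏ j ∈ Icc 1 K, (1 - 𝐞 η ^ (j * b)) = -I) (t : ℝ) :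
    (𝐞 (N * t) * (c * ∏ j ∈ Icc 1 K, (𝐞 t ^ b - 𝐞 η ^ (j * b)))).re =
      Real.sin (π * (b * K + 2 * N) * t) * sinNodeProd K b η t / sinNodeProd K b η 0 := by
  obtain ⟨C, hC⟩ := exists_expTwoPiI_mul_prod_pow_sub_eq N K b η
  have hC₀ : c * C * sinNodeProd K b η 0 = -I := by
    have h₀ := hC 0
    simp only [mul_zero, zero_div, expTwoPiI_zero, one_mul, one_pow, mul_one] at h₀
    rw [← hc, h₀, mul_assoc]
  rw [mul_left_comm, hC, ← mul_assoc, ← mul_assoc, re_mul_expTwoPiI_mul_ofReal hC₀]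
  ring_nf

section sinNodeProd

variable {K : ℕ} {b η : ℝ}

lemma mul_abs_sub_nat_mul_lt_one (hb : 0 < b) (hη : 0 < η) (hbK : b * K * η < 1) {t : ℝ}
    (ht₀ : 0 ≤ t) (ht : t < (K + 1) * η) {j : ℕ} (hj : j ∈ Icc 1 K) :
    b * |t - j * η| < 1 := by
  obtain ⟨hj₁, hjK⟩ := mem_Icc.1 hj
  have hj₁' : (1 : ℝ) ≤ j := by exact_mod_cast hj₁
  have hjK' : (j : ℝ) ≤ K := by exact_mod_cast hjK
  have : |t - j * η| ≤ K * η := abs_sub_le_iff.2 ⟨by nlinarith, by nlinarith⟩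
  calc b * |t - j * η| ≤ b * (K * η) := by gcongr
    _ < 1 := by linarith

lemma neg_one_pow_mul_sinNodeProd_zero_pos (hb : 0 < b) (hη : 0 < η) (hbK : b * K * η < 1) :
    0 < (-1) ^ K * sinNodeProd K b η 0 := by
  have hnode : ∀ j ∈ Icc 1 K, (0 : ℝ) ≠ j * η := fun j hj =>
    (mul_pos (by exact_mod_cast (mem_Icc.1 hj).1) hη).ne
  have hfilter : (Icc 1 K).filter (fun j : ℕ => (0 : ℝ) < j * η) = Icc 1 K :=
    filter_true_of_mem fun j hj => lt_of_le_of_ne (by positivity) (hnode j hj)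
  have := neg_one_pow_card_filter_mul_prod_sin_pos (x := fun j : ℕ => j * η) hb fun j hj =>
    ⟨hnode j hj, mul_abs_sub_nat_mul_lt_one hb hη hbK le_rfl (by positivity) hj⟩
  rwa [hfilter, Nat.card_Icc, Nat.add_sub_cancel] at this

lemma neg_one_pow_mul_sinNodeProd_pos (hb : 0 < b) (hη : 0 < η) (hbK : b * K * η < 1) {m : ℕ}
    (hm : m ≤ K) {t : ℝ} (h₁ : m * η < t) (h₂ : t < (m + 1) * η) :
    0 < (-1) ^ (K - m) * sinNodeProd K b η t := by
  have hmK : (m : ℝ) + 1 ≤ K + 1 := by exact_mod_cast Nat.succ_le_succ hm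
  have ht₀ : 0 ≤ t := le_trans (by positivity) h₁.le
  have hlt_iff (j : ℕ) : t < j * η ↔ m < j := by
    constructor
    · intro h
      have : (m : ℝ) * η < j * η := h₁.trans h
      exact_mod_cast lt_of_mul_lt_mul_right this hη.le
    · intro h
      have : ((m : ℝ) + 1) ≤ j := by exact_mod_cast h
      nlinarith
  have hfilter : (Icc 1 K).filter (fun j : ℕ => t < j * η) = Ioc m K := by
    ext j
    simp only [mem_filter, mem_Icc, mem_Ioc, hlt_iff]
    omega
  have hnode (j : ℕ) : t ≠ j * η := by
    rintro rfl
    have h₁' : (m : ℝ) < j := lt_of_mul_lt_mul_right h₁ hη.le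
    have h₂' : (j : ℝ) < m + 1 := lt_of_mul_lt_mul_right h₂ hη.le
    norm_cast at h₁' h₂'
    omega
  have := neg_one_pow_card_filter_mul_prod_sin_pos (x := fun j : ℕ => j * η) hb fun j hj =>
    ⟨hnode j, mul_abs_sub_nat_mul_lt_one hb hη hbK ht₀ (by nlinarith) hj⟩
  rwa [hfilter, Nat.card_Ioc] at this

lemma sin_mul_sinNodeProd_div_pos {m : ℕ} {t : ℝ} (hb : 0 < b) (hη : 0 < η)
    (hbK : b * K * η < 1) (hm : m ≤ K) (h₁ : m * η < t) (h₂ : t < (m + 1) * η) :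
    0 < Real.sin (π * (t / η)) * sinNodeProd K b η t / sinNodeProd K b η 0 := by
  have hsin := neg_one_pow_mul_sin_pi_mul_pos (m := m) (x := t / η)
    ((lt_div_iff₀ hη).2 h₁) ((div_lt_iff₀ hη).2 h₂)
  have hsign : (-1 : ℝ) ^ m * (-1) ^ (K - m) = (-1) ^ K := by
    rw [← pow_add, Nat.add_sub_cancel' hm]
  calc 0 < (-1) ^ m * Real.sin (π * (t / η)) * ((-1) ^ (K - m) * sinNodeProd K b η t) /
        ((-1) ^ K * sinNodeProd K b η 0) :=
      div_pos (mul_pos hsin (neg_one_pow_mul_sinNodeProd_pos hb hη hbK hm h₁ h₂))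
        (neg_one_pow_mul_sinNodeProd_zero_pos hb hη hbK)
    _ = _ := by
      rw [mul_mul_mul_comm, hsign, mul_div_mul_left _ _ (pow_ne_zero _ (by norm_num))]

lemma sin_mul_sinNodeProd_div_nonneg {t : ℝ} (hb : 0 < b) (hη : 0 < η)
    (hbK : b * K * η < 1) (ht₀ : 0 ≤ t) (ht : t ≤ (K + 1) * η) :
    0 ≤ Real.sin (π * (t / η)) * sinNodeProd K b η t / sinNodeProd K b η 0 := by
  rcases exists_eq_nat_mul_or_mem_Ioo hη ht₀ ht with ⟨j, -, rfl⟩ | ⟨m, hm, h₁, h₂⟩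
  · rw [sin_pi_mul_nat_mul_div hη.ne', zero_mul, zero_div]
  · exact (sin_mul_sinNodeProd_div_pos hb hη hbK hm h₁ h₂).le

lemma sin_mul_sinNodeProd_div_eq_zero_iff {t : ℝ} (hb : 0 < b) (hη : 0 < η)
    (hbK : b * K * η < 1) (ht₀ : 0 ≤ t) (ht : t ≤ (K + 1) * η) :
    Real.sin (π * (t / η)) * sinNodeProd K b η t / sinNodeProd K b η 0 = 0 ↔
      ∃ j ≤ K + 1, t = j * η := by
  constructor
  · intro h
    rcases exists_eq_nat_mul_or_mem_Ioo hη ht₀ ht with hj | ⟨m, hm, h₁, h₂⟩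
    · exact hj
    · exact absurd h (sin_mul_sinNodeProd_div_pos hb hη hbK hm h₁ h₂).ne'
  · rintro ⟨j, -, rfl⟩
    rw [sin_pi_mul_nat_mul_div hη.ne', zero_mul, zero_div]

end sinNodeProd

theorem extremal_polynomial_properties_general
    (N K b : ℕ) (hN : 1 ≤ N) (hb : 1 ≤ b)
    (S : Finset ℤ)
    (hS : ∀ lam : ℤ, lam ∈ S ↔ ∃ j : ℕ, j ≤ K ∧ |lam| = (N : ℤ) + j * b)
    (η a : ℝ) (hη : η = 1 / ((b : ℝ) * K + 2 * N)) (ha : a = ((K : ℝ) + 1) * η)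
    (τ : ℂ) (hτ : τ = Complex.exp (2 * Real.pi * Complex.I * (η : ℂ)))
    (c : ℂ) (Q : ℂ → ℂ)
    (hQ : ∀ z : ℂ, Q z = c * ∏ j ∈ Finset.Icc 1 K, (z ^ b - τ ^ (j * b)))
    (hc : Q 1 = -Complex.I)
    (f : ℝ → ℝ)
    (hf : ∀ t : ℝ, f t = (Complex.exp (2 * Real.pi * Complex.I * (N : ℂ) * (t : ℂ)) *
        Q (Complex.exp (2 * Real.pi * Complex.I * (t : ℂ)))).re) :
    (∃ co : ℤ → ℂ, ∀ t : ℝ, ((f t : ℝ) : ℂ) = ∑ lam ∈ S,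
        co lam * Complex.exp (2 * Real.pi * Complex.I * (lam : ℂ) * (t : ℂ))) ∧
    (∀ t ∈ Set.Icc 0 a, 0 ≤ f t) ∧
    (∀ t ∈ Set.Icc 0 a, (f t = 0 ↔ ∃ j : ℕ, j ≤ K + 1 ∧ t = (j : ℝ) * η)) := by
  subst hτ ha
  have hη₀ : 0 < η := by rw [hη]; positivity
  have hb₀ : (0 : ℝ) < b := by exact_mod_cast hb
  have hbK : b * K * η < 1 := by
    have : (1 : ℝ) ≤ N := by exact_mod_cast hN
    rw [hη, mul_one_div, div_lt_one (by positivity)]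
    linarith
  have hf' (t : ℝ) :
      f t = (𝐞 (N * t) * (c * ∏ j ∈ Icc 1 K, (𝐞 t ^ b - 𝐞 η ^ (j * b)))).re := by
    rw [hf, hQ]
    simp only [expTwoPiI, ofReal_mul, ofReal_natCast, mul_assoc]
  have hc' : c * ∏ j ∈ Icc 1 K, (1 - 𝐞 η ^ (j * b)) = -I := by
    rw [← hc, hQ, one_pow]
    rfl
  have hformula (t : ℝ) :
      f t = Real.sin (π * (t / η)) * sinNodeProd K b η t / sinNodeProd K b η 0 := by
    rw [hf', re_expTwoPiI_mul_prod_pow_sub N K b η c hc', hη, div_div_eq_mul_div, div_one]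
    ring_nf
  refine ⟨?_, fun t ht => ?_, fun t ht => ?_⟩
  · obtain ⟨co, hco⟩ :=
      hasSpectrumIn_re_expTwoPiI_mul_prod_pow_sub N K b c (fun j => 𝐞 η ^ (j * b)) hS
    refine ⟨co, fun t => ?_⟩
    rw [hf']
    refine (hco t).trans (sum_congr rfl fun lam _ => ?_)
    simp only [expTwoPiI, ofReal_mul, ofReal_intCast, mul_assoc]
  · exact hformula t ▸ sin_mul_sinNodeProd_div_nonneg hb₀ hη₀ hbK ht.1 ht.2
  · exact hformula t ▸ sin_mul_sinNodeProd_div_eq_zero_iff hb₀ hη₀ hbK ht.1 ht.2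

/-- The extremal polynomial in the proof of **Theorem 3** (Kozma–Oravecz): with
`η = 1/(bK+2N)`, `a = (K+1)η`, `τ = exp(2πiη)` and `Q(z) = c·∏_{j=1}^{K}(z^b - τ^{jb})`
normalized by `Q(1) = -i`, the function `f(t) = Re(exp(2πiNt)·Q(exp(2πit)))` is a real
trigonometric polynomial with spectrum in `S = {λ : |λ| = N + jb, 0 ≤ j ≤ K}`, is
nonnegative on `[0, a]`, and vanishes there exactly at `0, η, 2η, …, (K+1)η`. -/
theorem extremal_polynomial_properties
    (N K b : ℕ) (hN : 1 ≤ N) (hb : 1 ≤ b) (hbN : b < 2 * N)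
    (S : Finset ℤ)
    (hS : ∀ lam : ℤ, lam ∈ S ↔ ∃ j : ℕ, j ≤ K ∧ |lam| = (N : ℤ) + j * b)
    (η a : ℝ) (hη : η = 1 / ((b : ℝ) * K + 2 * N)) (ha : a = ((K : ℝ) + 1) * η)
    (τ : ℂ) (hτ : τ = Complex.exp (2 * Real.pi * Complex.I * (η : ℂ)))
    (c : ℂ) (Q : ℂ → ℂ)
    (hQ : ∀ z : ℂ, Q z = c * ∏ j ∈ Finset.Icc 1 K, (z ^ b - τ ^ (j * b)))
    (hc : Q 1 = -Complex.I)
    (f : ℝ → ℝ)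
    (hf : ∀ t : ℝ, f t = (Complex.exp (2 * Real.pi * Complex.I * (N : ℂ) * (t : ℂ)) *
        Q (Complex.exp (2 * Real.pi * Complex.I * (t : ℂ)))).re) :
    (∃ co : ℤ → ℂ, ∀ t : ℝ, ((f t : ℝ) : ℂ) = ∑ lam ∈ S,
        co lam * Complex.exp (2 * Real.pi * Complex.I * (lam : ℂ) * (t : ℂ))) ∧
    (∀ t ∈ Set.Icc 0 a, 0 ≤ f t) ∧
    (∀ t ∈ Set.Icc 0 a, (f t = 0 ↔ ∃ j : ℕ, j ≤ K + 1 ∧ t = (j : ℝ) * η)) :=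
  extremal_polynomial_properties_general N K b hN hb S hS η a hη ha τ hτ c Q hQ hc f hf
end

section
/- Let d ≥ 1, let S ⊂ ℤ^d be a finite set with 0 ∉ S and −S = S, and let f(x) = Σ_{λ∈S} c(λ)·exp(2πi⟨x,λ⟩) be real-valued for every x ∈ ℝ^d. Fix ν ∈ S, set μ = ν/(2‖ν‖₂²) ∈ ℝ^d, and define f̃(x) = f(x) + f(x+μ). Then f̃(x) = Σ_{λ∈S} c(λ)·(1 + exp(2πi⟨μ,λ⟩))·exp(2πi⟨x,λ⟩) is a real trigonometric polynomial with spectrum contained in S \ {ν, −ν}, and if f(x) > 0 for every x in the closed Euclidean ball B(y,R) with R ≥ ‖μ‖₂/2, then f̃(x) > 0 for every x in the closed Euclidean ball B(y − μ/2, R − ‖μ‖₂/2). -/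
/-!
Since `⟨μ, ν⟩ = 1/2`, translating by `μ` multiplies the Fourier coefficients at `±ν` by
`e^{±πi} = -1`, so they cancel in `f + f(· + μ)`. Positivity: the ball `B(y - μ/2, R - ‖μ‖/2)`
and its translate by `μ` both lie in `B(y, R)`, where `f > 0`.
-/

open Complex Metric Real

section

variable {ι : Type*} [Fintype ι]

theorem one_add_exp_two_pi_I_mul_eq_zero {t : ℝ} (ht : ∃ n : ℤ, t = n + 1 / 2) :
    1 + cexp (2 * π * I * (t : ℂ)) = 0 := by
  obtain ⟨n, rfl⟩ := ht
  have split : 2 * π * I * (((n + 1 / 2 : ℝ)) : ℂ) = n * (2 * π * I) + π * I := by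
    push_cast; ring
  rw [split, Complex.exp_add, exp_int_mul_two_pi_mul_I, exp_pi_mul_I]
  ring

theorem sum_div_two_sum_sq_mul_self {v : ι → ℝ} (hv : v ≠ 0) :
    ∑ j, v j / (2 * ∑ i, v i ^ 2) * v j = 1 / 2 := by
  obtain ⟨i, hi⟩ := Function.ne_iff.mp hv
  have hpos : 0 < ∑ i, v i ^ 2 :=
    Finset.sum_pos' (fun j _ => sq_nonneg _) ⟨i, Finset.mem_univ i, sq_pos_of_ne_zero hi⟩
  simp_rw [div_mul_eq_mul_div, ← sq, ← Finset.sum_div]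
  field_simp

theorem exp_two_pi_I_sum_add_mul (x μ : ι → ℝ) (lam : ι → ℤ) :
    cexp (2 * π * I * ((∑ j, (x + μ) j * (lam j : ℝ) : ℝ) : ℂ)) =
      cexp (2 * π * I * ((∑ j, μ j * (lam j : ℝ) : ℝ) : ℂ)) *
        cexp (2 * π * I * ((∑ j, x j * (lam j : ℝ) : ℝ) : ℂ)) := by
  rw [← Complex.exp_add]
  congr 1
  simp only [Pi.add_apply, add_mul, Finset.sum_add_distrib]
  push_cast
  ring

theorem add_translate_eq_sum {S : Finset (ι → ℤ)} {c : (ι → ℤ) → ℂ} {f : (ι → ℝ) → ℂ}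
    (hf : ∀ x, f x = ∑ lam ∈ S,
      c lam * cexp (2 * π * I * ((∑ j, x j * (lam j : ℝ) : ℝ) : ℂ)))
    (μ x : ι → ℝ) :
    f x + f (x + μ) = ∑ lam ∈ S,
      c lam * (1 + cexp (2 * π * I * ((∑ j, μ j * (lam j : ℝ) : ℝ) : ℂ))) *
        cexp (2 * π * I * ((∑ j, x j * (lam j : ℝ) : ℝ) : ℂ)) := by
  rw [hf, hf, ← Finset.sum_add_distrib]
  refine Finset.sum_congr rfl fun lam _ => ?_
  rw [exp_two_pi_I_sum_add_mul]
  ring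

theorem sqrt_sum_sq_sub_eq_dist (x y : ι → ℝ) :
    √(∑ j, (x j - y j) ^ 2) = dist (WithLp.toLp 2 x) (WithLp.toLp 2 y) := by
  simp [EuclideanSpace.dist_eq, Real.dist_eq, sq_abs]

theorem sqrt_sum_sq_eq_norm (v : ι → ℝ) : √(∑ j, v j ^ 2) = ‖WithLp.toLp 2 v‖ := by
  simp [EuclideanSpace.norm_eq, Real.norm_eq_abs, sq_abs]

end

theorem mem_closedBall_of_mem_closedBall_sub_half {E : Type*} [SeminormedAddCommGroup E]
    [NormedSpace ℝ E] {x y μ : E} {R : ℝ}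
    (hx : x ∈ closedBall (y - (2 : ℝ)⁻¹ • μ) (R - ‖μ‖ / 2)) :
    x ∈ closedBall y R ∧ x + μ ∈ closedBall y R := by
  have half : ‖(2 : ℝ)⁻¹ • μ‖ = ‖μ‖ / 2 := by
    rw [norm_smul]; norm_num; ring
  constructor
  · refine closedBall_subset_closedBall' ?_ hx
    rw [dist_eq_norm, sub_sub_cancel_left, norm_neg, half, sub_add_cancel]
  · have hx' : x + μ ∈ closedBall (y + (2 : ℝ)⁻¹ • μ) (R - ‖μ‖ / 2) := by
      have shift : x + μ - (y + (2 : ℝ)⁻¹ • μ) = x - (y - (2 : ℝ)⁻¹ • μ) := by module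
      rwa [mem_closedBall, dist_eq_norm, shift, ← dist_eq_norm]
    refine closedBall_subset_closedBall' ?_ hx'
    rw [dist_eq_norm, add_sub_cancel_left, half, sub_add_cancel]

theorem translate_and_add_step_general
    (d : ℕ)
    (S : Finset (Fin d → ℤ)) (h0 : (0 : Fin d → ℤ) ∉ S)
    (c : (Fin d → ℤ) → ℂ) (f : (Fin d → ℝ) → ℂ)
    (hf : ∀ x : Fin d → ℝ, f x = ∑ lam ∈ S,
      c lam * Complex.exp (2 * Real.pi * Complex.I * ((∑ j, x j * (lam j : ℝ) : ℝ) : ℂ)))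
    (hreal : ∀ x : Fin d → ℝ, (f x).im = 0)
    (ν : Fin d → ℤ) (hν : ν ∈ S)
    (μ : Fin d → ℝ)
    (hμ : μ = fun j => (ν j : ℝ) / (2 * ∑ i, ((ν i : ℝ)) ^ 2))
    (g : (Fin d → ℝ) → ℂ)
    (hg : ∀ x : Fin d → ℝ, g x = f x + f (x + μ)) :
    (∀ x : Fin d → ℝ, g x = ∑ lam ∈ S,
      c lam * (1 + Complex.exp (2 * Real.pi * Complex.I *
          ((∑ j, μ j * (lam j : ℝ) : ℝ) : ℂ))) *
        Complex.exp (2 * Real.pi * Complex.I * ((∑ j, x j * (lam j : ℝ) : ℝ) : ℂ))) ∧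
    (∀ x : Fin d → ℝ, (g x).im = 0) ∧
    (1 + Complex.exp (2 * Real.pi * Complex.I *
        ((∑ j, μ j * (ν j : ℝ) : ℝ) : ℂ)) = 0) ∧
    (1 + Complex.exp (2 * Real.pi * Complex.I *
        ((∑ j, μ j * ((-ν) j : ℝ) : ℝ) : ℂ)) = 0) ∧
    (∀ (y : Fin d → ℝ) (R : ℝ), Real.sqrt (∑ j, μ j ^ 2) / 2 ≤ R →
      (∀ x : Fin d → ℝ, Real.sqrt (∑ j, (x j - y j) ^ 2) ≤ R → 0 < (f x).re) →
      ∀ x : Fin d → ℝ,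
        Real.sqrt (∑ j, (x j - (y j - μ j / 2)) ^ 2) ≤ R - Real.sqrt (∑ j, μ j ^ 2) / 2 →
        0 < (g x).re) := by
  have hν0 : (fun j => (ν j : ℝ)) ≠ 0 := fun h =>
    h0 (by convert hν; funext j; simpa [eq_comm] using congrFun h j)
  have hdot : ∑ j, μ j * (ν j : ℝ) = 1 / 2 := hμ ▸ sum_div_two_sum_sq_mul_self hν0
  have hdot_neg : ∑ j, μ j * ((-ν) j : ℝ) = -(1 / 2) := by
    simp only [Pi.neg_apply, Int.cast_neg, mul_neg, Finset.sum_neg_distrib, hdot]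
  refine ⟨fun x => by rw [hg, add_translate_eq_sum hf], fun x => by simp [hg, hreal],
    one_add_exp_two_pi_I_mul_eq_zero ⟨0, by rw [hdot]; norm_num⟩,
    one_add_exp_two_pi_I_mul_eq_zero ⟨-1, by rw [hdot_neg]; norm_num⟩, ?_⟩
  intro y R _ hpos x hx
  have hcenter : WithLp.toLp 2 (fun j => y j - μ j / 2) =
      WithLp.toLp 2 y - (2 : ℝ)⁻¹ • WithLp.toLp 2 μ := by
    ext j; simp; ring
  rw [sqrt_sum_sq_sub_eq_dist x (fun j => y j - μ j / 2), sqrt_sum_sq_eq_norm, hcenter] at hx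
  obtain ⟨hx₁, hx₂⟩ := mem_closedBall_of_mem_closedBall_sub_half hx
  rw [← WithLp.toLp_add] at hx₂
  rw [mem_closedBall, ← sqrt_sum_sq_sub_eq_dist] at hx₁ hx₂
  rw [hg, add_re]
  exact add_pos (hpos x hx₁) (hpos _ hx₂)

/-- The induction step in the proof of **Theorem 1** (Kozma–Oravecz): for `ν ∈ S` and
`μ = ν/(2‖ν‖₂²)`, the function `f̃(x) = f(x) + f(x+μ)` is the trigonometric polynomial
`∑_{λ∈S} c(λ)(1 + e^{2πi⟨μ,λ⟩})e^{2πi⟨x,λ⟩}`; it is real-valued, its coefficients at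
`±ν` vanish (so its spectrum is contained in `S \ {ν, -ν}`), and if `f > 0` on the closed
ball `B(y,R)` with `R ≥ ‖μ‖₂/2` then `f̃ > 0` on the closed ball `B(y-μ/2, R-‖μ‖₂/2)`. -/
theorem translate_and_add_step
    (d : ℕ) (hd : 1 ≤ d)
    (S : Finset (Fin d → ℤ)) (h0 : (0 : Fin d → ℤ) ∉ S)
    (hsym : ∀ lam ∈ S, -lam ∈ S)
    (c : (Fin d → ℤ) → ℂ) (f : (Fin d → ℝ) → ℂ)
    (hf : ∀ x : Fin d → ℝ, f x = ∑ lam ∈ S,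
      c lam * Complex.exp (2 * Real.pi * Complex.I * ((∑ j, x j * (lam j : ℝ) : ℝ) : ℂ)))
    (hreal : ∀ x : Fin d → ℝ, (f x).im = 0)
    (ν : Fin d → ℤ) (hν : ν ∈ S)
    (μ : Fin d → ℝ)
    (hμ : μ = fun j => (ν j : ℝ) / (2 * ∑ i, ((ν i : ℝ)) ^ 2))
    (g : (Fin d → ℝ) → ℂ)
    (hg : ∀ x : Fin d → ℝ, g x = f x + f (x + μ)) :
    (∀ x : Fin d → ℝ, g x = ∑ lam ∈ S,
      c lam * (1 + Complex.exp (2 * Real.pi * Complex.I *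
          ((∑ j, μ j * (lam j : ℝ) : ℝ) : ℂ))) *
        Complex.exp (2 * Real.pi * Complex.I * ((∑ j, x j * (lam j : ℝ) : ℝ) : ℂ))) ∧
    (∀ x : Fin d → ℝ, (g x).im = 0) ∧
    (1 + Complex.exp (2 * Real.pi * Complex.I *
        ((∑ j, μ j * (ν j : ℝ) : ℝ) : ℂ)) = 0) ∧
    (1 + Complex.exp (2 * Real.pi * Complex.I *
        ((∑ j, μ j * ((-ν) j : ℝ) : ℝ) : ℂ)) = 0) ∧
    (∀ (y : Fin d → ℝ) (R : ℝ), Real.sqrt (∑ j, μ j ^ 2) / 2 ≤ R →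
      (∀ x : Fin d → ℝ, Real.sqrt (∑ j, (x j - y j) ^ 2) ≤ R → 0 < (f x).re) →
      ∀ x : Fin d → ℝ,
        Real.sqrt (∑ j, (x j - (y j - μ j / 2)) ^ 2) ≤ R - Real.sqrt (∑ j, μ j ^ 2) / 2 →
        0 < (g x).re) :=
  translate_and_add_step_general d S h0 c f hf hreal ν hν μ hμ g hg
end

section
/- Let 0 < a < 1 and let ξ ∈ ℂ be such that ξ ≠ exp(2πis) for every s ∈ [0,a]. Then the total variation of the argument of exp(2πit) − ξ as t runs from 0 to a, namely ind = Im ∫₀^a (2πi·exp(2πit))/(exp(2πit) − ξ) dt, satisfies ind ≥ π(a − 1). -/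
/-! For `‖w‖ = 1` one has `Im (2πi w / (w - ξ)) = π + π (1 - ‖ξ‖²) / ‖w - ξ‖²`. If `‖ξ‖ ≤ 1` the
integrand therefore has imaginary part at least `π`, and the index is at least `πa`. If `‖ξ‖ > 1`
the imaginary part is at most `π`, and the integrand is the derivative of the `1`-periodic function
`log (1 - e^{2πit} / ξ)`, so its integral over `[0, 1]` vanishes; the integral over `[0, a]` is then
minus the integral over `[a, 1]`, which is at least `-π (1 - a)`. -/

open Complex intervalIntegral
open scoped Real

noncomputable def circleLoop (t : ℝ) : ℂ := exp (2 * π * I * t)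

noncomputable def circleWindingIntegrand (ξ : ℂ) (t : ℝ) : ℂ :=
  2 * π * I * circleLoop t / (circleLoop t - ξ)

theorem norm_circleLoop (t : ℝ) : ‖circleLoop t‖ = 1 := by
  simpa [circleLoop, mul_comm _ I, mul_assoc, mul_left_comm] using norm_exp_ofReal_mul_I (2 * π * t)

theorem circleLoop_zero : circleLoop 0 = 1 := by simp [circleLoop]

theorem circleLoop_one : circleLoop 1 = 1 := by simp [circleLoop]

theorem continuous_circleLoop : Continuous circleLoop := by
  unfold circleLoop; fun_prop

theorem hasDerivAt_circleLoop (t : ℝ) : HasDerivAt circleLoop (2 * π * I * circleLoop t) t := by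
  have := ((hasDerivAt_id (t : ℂ)).const_mul (2 * π * I)).cexp.comp_ofReal
  simp only [id, mul_one] at this
  convert this using 1
  · ext s; simp [circleLoop, mul_comm]
  · simp [circleLoop]; ring

theorem circleLoop_ne_of_one_lt_norm {ξ : ℂ} (hξ : 1 < ‖ξ‖) (t : ℝ) : circleLoop t ≠ ξ := by
  rintro rfl
  simp [norm_circleLoop] at hξ

theorem two_mul_re_div_sub_of_norm_eq_one {w ξ : ℂ} (hw : ‖w‖ = 1) (hwξ : w ≠ ξ) :
    2 * (w / (w - ξ)).re = 1 + (1 - ‖ξ‖ ^ 2) / ‖w - ξ‖ ^ 2 := by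
  obtain ⟨d, hd, rfl⟩ : ∃ d, d ≠ 0 ∧ ξ = w - d := ⟨w - ξ, sub_ne_zero.2 hwξ, by ring⟩
  have hD : normSq d ≠ 0 := normSq_pos.2 hd |>.ne'
  have hξ : ‖w - d‖ ^ 2 = 1 + normSq d - 2 * (w.re * d.re + w.im * d.im) := by
    rw [← normSq_eq_norm_sq, normSq_sub, normSq_eq_norm_sq, hw]
    simp [mul_re]
  rw [sub_sub_cancel, hξ, ← normSq_eq_norm_sq, div_re]
  field_simp
  ring

theorem im_two_pi_I_mul_div_sub {w ξ : ℂ} (hw : ‖w‖ = 1) (hwξ : w ≠ ξ) :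
    (2 * π * I * w / (w - ξ)).im = π + π * (1 - ‖ξ‖ ^ 2) / ‖w - ξ‖ ^ 2 := by
  have h := two_mul_re_div_sub_of_norm_eq_one hw hwξ
  have : 2 * π * I * w / (w - ξ) = ((2 * π : ℝ) : ℂ) * (I * (w / (w - ξ))) := by
    push_cast; ring
  rw [this, im_ofReal_mul, I_mul_im]
  linear_combination π * h

theorem im_circleWindingIntegrand {ξ : ℂ} {t : ℝ} (ht : circleLoop t ≠ ξ) :
    (circleWindingIntegrand ξ t).im = π + π * (1 - ‖ξ‖ ^ 2) / ‖circleLoop t - ξ‖ ^ 2 :=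
  im_two_pi_I_mul_div_sub (norm_circleLoop t) ht

theorem pi_le_im_circleWindingIntegrand {ξ : ℂ} (hξ : ‖ξ‖ ≤ 1) {t : ℝ} (ht : circleLoop t ≠ ξ) :
    π ≤ (circleWindingIntegrand ξ t).im := by
  rw [im_circleWindingIntegrand ht, le_add_iff_nonneg_right]
  have : ‖ξ‖ ^ 2 ≤ 1 := pow_le_one₀ (norm_nonneg ξ) hξ
  positivity

theorem im_circleWindingIntegrand_le_pi {ξ : ℂ} (hξ : 1 ≤ ‖ξ‖) {t : ℝ} (ht : circleLoop t ≠ ξ) :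
    (circleWindingIntegrand ξ t).im ≤ π := by
  rw [im_circleWindingIntegrand ht, add_le_iff_nonpos_right]
  have : 1 ≤ ‖ξ‖ ^ 2 := one_le_pow₀ hξ
  exact div_nonpos_of_nonpos_of_nonneg
    (mul_nonpos_of_nonneg_of_nonpos Real.pi_pos.le (by linarith)) (sq_nonneg _)

theorem continuousOn_circleWindingIntegrand {ξ : ℂ} {s : Set ℝ} (hs : ∀ t ∈ s, circleLoop t ≠ ξ) :
    ContinuousOn (circleWindingIntegrand ξ) s :=
  ((continuous_const.mul continuous_circleLoop).continuousOn).div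
    (continuous_circleLoop.sub continuous_const).continuousOn fun t ht => sub_ne_zero.2 (hs t ht)

theorem hasDerivAt_log_one_sub_circleLoop_div {ξ : ℂ} (hξ : 1 < ‖ξ‖) (t : ℝ) :
    HasDerivAt (fun t => log (1 - circleLoop t / ξ)) (circleWindingIntegrand ξ t) t := by
  have hξ0 : ξ ≠ 0 := norm_pos_iff.1 (one_pos.trans hξ)
  have hslit : 1 - circleLoop t / ξ ∈ slitPlane := by
    refine Or.inl ?_
    have : (circleLoop t / ξ).re < 1 := by
      calc (circleLoop t / ξ).re ≤ ‖circleLoop t / ξ‖ := re_le_norm _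
        _ = 1 / ‖ξ‖ := by rw [norm_div, norm_circleLoop]
        _ < 1 := (div_lt_one (one_pos.trans hξ)).2 hξ
    simpa using this
  convert ((hasDerivAt_circleLoop t).div_const ξ).const_sub 1 |>.clog_real hslit using 1
  rw [circleWindingIntegrand, one_sub_div hξ0, neg_div, div_div_div_cancel_right₀ hξ0, ← div_neg,
    neg_sub]

theorem integral_circleWindingIntegrand_zero_one {ξ : ℂ} (hξ : 1 < ‖ξ‖) :
    ∫ t in (0 : ℝ)..1, circleWindingIntegrand ξ t = 0 := by
  have hint : IntervalIntegrable (circleWindingIntegrand ξ) MeasureTheory.volume 0 1 :=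
    (continuousOn_circleWindingIntegrand fun t _ => circleLoop_ne_of_one_lt_norm hξ t).intervalIntegrable
  rw [integral_eq_sub_of_hasDerivAt (fun t _ => hasDerivAt_log_one_sub_circleLoop_div hξ t) hint,
    circleLoop_zero, circleLoop_one, sub_self]

theorem pi_mul_le_im_integral_circleWindingIntegrand {a : ℝ} (ha : 0 ≤ a) {ξ : ℂ} (hξ : ‖ξ‖ ≤ 1)
    (h : ∀ s ∈ Set.Icc 0 a, circleLoop s ≠ ξ) :
    π * a ≤ (∫ t in (0 : ℝ)..a, circleWindingIntegrand ξ t).im := by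
  rw [← Set.uIcc_of_le ha] at h
  have hcont := continuousOn_circleWindingIntegrand h
  have him : ∫ t in (0 : ℝ)..a, (circleWindingIntegrand ξ t).im =
      (∫ t in (0 : ℝ)..a, circleWindingIntegrand ξ t).im := intervalIntegral_im hcont.intervalIntegrable
  calc π * a = ∫ _ in (0 : ℝ)..a, π := by simp [mul_comm]
    _ ≤ ∫ t in (0 : ℝ)..a, (circleWindingIntegrand ξ t).im :=
        integral_mono_on ha intervalIntegrable_const
          (continuous_im.comp_continuousOn hcont).intervalIntegrable
          fun t ht => pi_le_im_circleWindingIntegrand hξ (h t (Set.Icc_subset_uIcc ht))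
    _ = _ := him

theorem pi_mul_sub_one_le_im_integral_circleWindingIntegrand {a : ℝ} (ha : a ≤ 1) {ξ : ℂ}
    (hξ : 1 < ‖ξ‖) : π * (a - 1) ≤ (∫ t in (0 : ℝ)..a, circleWindingIntegrand ξ t).im := by
  have hne := circleLoop_ne_of_one_lt_norm hξ
  have hcont : Continuous (circleWindingIntegrand ξ) :=
    continuousOn_univ.1 (continuousOn_circleWindingIntegrand fun t _ => hne t)
  have him (b : ℝ) : ∫ t in (0 : ℝ)..b, (circleWindingIntegrand ξ t).im =
      (∫ t in (0 : ℝ)..b, circleWindingIntegrand ξ t).im :=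
    intervalIntegral_im (hcont.intervalIntegrable 0 b)
  have hcont_im : Continuous fun t => (circleWindingIntegrand ξ t).im := continuous_im.comp hcont
  have htail : ∫ t in a..1, (circleWindingIntegrand ξ t).im ≤ π * (1 - a) := by
    calc ∫ t in a..1, (circleWindingIntegrand ξ t).im ≤ ∫ _ in a..1, π :=
          integral_mono_on ha (hcont_im.intervalIntegrable a 1) intervalIntegrable_const
            fun t _ => im_circleWindingIntegrand_le_pi hξ.le (hne t)
      _ = π * (1 - a) := by simp [mul_comm]
  have hsplit := integral_interval_sub_left
    (hcont_im.intervalIntegrable (μ := MeasureTheory.volume) 0 1) (hcont_im.intervalIntegrable 0 a)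
  rw [him, him, integral_circleWindingIntegrand_zero_one hξ, zero_im] at hsplit
  linarith

/-- Index bound (4) in the proof of Theorem 3 (Kozma–Oravecz): if `ξ` avoids the arc
`{e^{2πis} : s ∈ [0,a]}`, then the change of argument of `e^{2πit} - ξ` as `t` runs
from `0` to `a` is at least `π(a-1)`. -/
theorem index_single_root_lower_bound
    (a : ℝ) (ha0 : 0 < a) (ha1 : a < 1) (ξ : ℂ)
    (hξ : ∀ s ∈ Set.Icc (0 : ℝ) a, ξ ≠ Complex.exp (2 * Real.pi * Complex.I * (s : ℂ))) :
    Real.pi * (a - 1) ≤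
      (∫ t in (0 : ℝ)..a,
        (2 * Real.pi * Complex.I * Complex.exp (2 * Real.pi * Complex.I * (t : ℂ))) /
          (Complex.exp (2 * Real.pi * Complex.I * (t : ℂ)) - ξ)).im := by
  change π * (a - 1) ≤ (∫ t in (0 : ℝ)..a, circleWindingIntegrand ξ t).im
  rcases le_or_gt ‖ξ‖ 1 with hle | hgt
  · have := pi_mul_le_im_integral_circleWindingIntegrand ha0.le hle fun s hs => (hξ s hs).symm
    nlinarith [Real.pi_pos]
  · exact pi_mul_sub_one_le_im_integral_circleWindingIntegrand ha1.le hgt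
end

section
/- Let b ≥ 1 be an integer, let 0 < a < 1/b, and let ξ ∈ ℂ be such that exp(2πibt) ≠ ξ^b for every t ∈ [0,a]. Then the change of continuous argument of exp(2πibt) − ξ^b as t runs from 0 to a, namely ind = Im ∫₀^a (2πib·exp(2πibt))/(exp(2πibt) − ξ^b) dt, satisfies ind ≥ π(ba − 1). -/
/-!
Write `z = exp (2πibt)` and `w = ξ ^ b`. The imaginary part of the integrand is
`2πb · Re (z / (z - w))`, and `Re (z / (z - w)) - 1/2` has the sign of `|z|² - |w|² = 1 - |w|²`.
If `|w| ≤ 1` the integrand therefore has imaginary part at least `πb`, so the index is at least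
`πba`. If `|w| > 1`, then `(z - w) · (-conj w)` stays in the right half-plane, so `z - w` has a
continuous logarithm and the integral over a full period `[0, 1/b]` vanishes; the imaginary part
over `[a, 1/b]` is at most `πb (1/b - a)`, which leaves at least `π (ba - 1)` for `[0, a]`.
-/

open Complex MeasureTheory Set intervalIntegral
open scoped Real ComplexConjugate

namespace Complex

lemma re_div_sub_sub_one_half {z w : ℂ} (h : z ≠ w) :
    (z / (z - w)).re - 1 / 2 = (normSq z - normSq w) / (2 * normSq (z - w)) := by
  have hd : normSq (z - w) ≠ 0 := normSq_eq_zero.not.mpr (sub_ne_zero.mpr h)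
  rw [div_re, ← add_div]
  field_simp
  simp only [normSq_apply, sub_re, sub_im]
  ring

lemma one_half_le_re_div_sub {z w : ℂ} (h : z ≠ w) (hzw : ‖w‖ ≤ ‖z‖) :
    1 / 2 ≤ (z / (z - w)).re := by
  have : 0 ≤ (normSq z - normSq w) / (2 * normSq (z - w)) := by
    refine div_nonneg ?_ (mul_nonneg zero_le_two (normSq_nonneg _))
    rw [normSq_eq_norm_sq, normSq_eq_norm_sq, sub_nonneg]
    gcongr
  linarith [re_div_sub_sub_one_half h]

lemma re_div_sub_le_one_half {z w : ℂ} (h : z ≠ w) (hzw : ‖z‖ ≤ ‖w‖) :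
    (z / (z - w)).re ≤ 1 / 2 := by
  have : (normSq z - normSq w) / (2 * normSq (z - w)) ≤ 0 := by
    refine div_nonpos_of_nonpos_of_nonneg ?_ (mul_nonneg zero_le_two (normSq_nonneg _))
    rw [normSq_eq_norm_sq, normSq_eq_norm_sq, sub_nonpos]
    gcongr
  linarith [re_div_sub_sub_one_half h]

lemma re_sub_mul_neg_conj_pos {z w : ℂ} (h : ‖z‖ < ‖w‖) : 0 < ((z - w) * -conj w).re := by
  have : (z * conj w).re ≤ ‖z‖ * ‖w‖ := by
    simpa using re_le_norm (z * conj w)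
  rw [mul_neg, sub_mul, mul_conj, neg_re, sub_re, ofReal_re, normSq_eq_norm_sq]
  nlinarith [norm_nonneg z]

end Complex

theorem integral_deriv_div_sub_eq_zero_of_norm_lt {γ γ' : ℝ → ℂ} {w : ℂ} {u v : ℝ}
    (hγ : ∀ t ∈ uIcc u v, HasDerivAt γ (γ' t) t)
    (hint : IntervalIntegrable (fun t => γ' t / (γ t - w)) volume u v)
    (hlt : ∀ t ∈ uIcc u v, ‖γ t‖ < ‖w‖) (hclosed : γ u = γ v) :
    ∫ t in u..v, γ' t / (γ t - w) = 0 := by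
  have hw : -conj w ≠ 0 := by
    simpa using (norm_nonneg _).trans_lt (hlt u left_mem_uIcc)
  -- `(γ - w) * -conj w` stays in the right half-plane, where `log` is a primitive.
  have hlog : ∀ t ∈ uIcc u v,
      HasDerivAt (fun s => log ((γ s - w) * -conj w)) (γ' t / (γ t - w)) t := by
    intro t ht
    have := (((hγ t ht).sub_const w).mul_const (-conj w)).clog_real
      (mem_slitPlane_iff.mpr (Or.inl (re_sub_mul_neg_conj_pos (hlt t ht))))
    rwa [mul_div_mul_right _ _ hw] at this
  rw [integral_eq_sub_of_hasDerivAt hlog hint, hclosed, sub_self]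

lemma mul_le_im_intervalIntegral {f : ℝ → ℂ} {u v m : ℝ} (huv : u ≤ v)
    (hf : IntervalIntegrable f volume u v) (h : ∀ t ∈ Icc u v, m ≤ (f t).im) :
    (v - u) * m ≤ (∫ t in u..v, f t).im := by
  rw [← imCLM_apply, ← imCLM.intervalIntegral_comp_comm hf, ← smul_eq_mul,
    ← intervalIntegral.integral_const]
  exact integral_mono_on huv intervalIntegrable_const ⟨hf.1.im, hf.2.im⟩ h

lemma im_intervalIntegral_le_mul {f : ℝ → ℂ} {u v m : ℝ} (huv : u ≤ v)
    (hf : IntervalIntegrable f volume u v) (h : ∀ t ∈ Icc u v, (f t).im ≤ m) :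
    (∫ t in u..v, f t).im ≤ (v - u) * m := by
  rw [← imCLM_apply, ← imCLM.intervalIntegral_comp_comm hf, ← smul_eq_mul,
    ← intervalIntegral.integral_const]
  exact integral_mono_on huv ⟨hf.1.im, hf.2.im⟩ intervalIntegrable_const h

section Circle

variable {c : ℝ} {w : ℂ}

lemma norm_exp_ofReal_mul_ofReal_mul_I (c t : ℝ) : ‖exp (c * t * I)‖ = 1 := by
  exact_mod_cast norm_exp_ofReal_mul_I (c * t)

lemma exp_ofReal_mul_ofReal_mul_I_ne (hw : ‖w‖ ≠ 1) (c t : ℝ) : exp (c * t * I) ≠ w := by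
  rintro rfl
  exact hw (norm_exp_ofReal_mul_ofReal_mul_I c t)

lemma hasDerivAt_exp_ofReal_mul_ofReal_mul_I (c t : ℝ) :
    HasDerivAt (fun s : ℝ => exp (c * s * I)) (c * I * exp (c * t * I)) t := by
  have := ((ofRealCLM.hasDerivAt (x := t)).const_mul (c : ℂ)).mul_const I
  simpa [mul_comm, mul_left_comm] using this.cexp

variable (c w) in
noncomputable def circleSubLogDeriv (t : ℝ) : ℂ :=
  c * I * exp (c * t * I) / (exp (c * t * I) - w)

lemma im_circleSubLogDeriv (t : ℝ) :
    (circleSubLogDeriv c w t).im = c * (exp (c * t * I) / (exp (c * t * I) - w)).re := by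
  simp [circleSubLogDeriv, mul_div_assoc]

lemma intervalIntegrable_circleSubLogDeriv {u v : ℝ}
    (h : ∀ t ∈ uIcc u v, exp (c * t * I) ≠ w) :
    IntervalIntegrable (circleSubLogDeriv c w) volume u v := by
  apply ContinuousOn.intervalIntegrable
  unfold circleSubLogDeriv
  exact ContinuousOn.div (by fun_prop) (by fun_prop) fun t ht => sub_ne_zero.mpr (h t ht)

lemma integral_circleSubLogDeriv_period_eq_zero (hc : c ≠ 0) (hw : 1 < ‖w‖) :
    ∫ t in (0 : ℝ)..2 * π / c, circleSubLogDeriv c w t = 0 := by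
  refine integral_deriv_div_sub_eq_zero_of_norm_lt
    (fun t _ => hasDerivAt_exp_ofReal_mul_ofReal_mul_I c t)
    (intervalIntegrable_circleSubLogDeriv fun t _ => exp_ofReal_mul_ofReal_mul_I_ne hw.ne' c t)
    (fun t _ => by rwa [norm_exp_ofReal_mul_ofReal_mul_I]) ?_
  have hc' : (c : ℂ) ≠ 0 := ofReal_ne_zero.mpr hc
  have : (c : ℂ) * ((2 * π / c : ℝ) : ℂ) * I = 2 * π * I := by push_cast; field_simp
  simp only [this, exp_two_pi_mul_I, ofReal_zero, mul_zero, zero_mul, exp_zero]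

lemma mul_div_two_le_im_integral_circleSubLogDeriv_of_norm_le_one (hc : 0 ≤ c) {a : ℝ}
    (ha : 0 ≤ a) (hw : ‖w‖ ≤ 1) (hne : ∀ t ∈ Icc 0 a, exp (c * t * I) ≠ w) :
    c * a / 2 ≤ (∫ t in (0 : ℝ)..a, circleSubLogDeriv c w t).im := by
  have hint : IntervalIntegrable (circleSubLogDeriv c w) volume 0 a :=
    intervalIntegrable_circleSubLogDeriv fun t ht => hne t (by rwa [uIcc_of_le ha] at ht)
  calc c * a / 2 = (a - 0) * (c * (1 / 2)) := by ring
    _ ≤ _ := mul_le_im_intervalIntegral ha hint fun t ht => by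
      rw [im_circleSubLogDeriv]
      exact mul_le_mul_of_nonneg_left (one_half_le_re_div_sub (hne t ht)
        (by rwa [norm_exp_ofReal_mul_ofReal_mul_I])) hc

lemma mul_div_two_sub_pi_le_im_integral_circleSubLogDeriv_of_one_lt_norm (hc : 0 < c) {a : ℝ}
    (ha : a ≤ 2 * π / c) (hw : 1 < ‖w‖) :
    c * a / 2 - π ≤ (∫ t in (0 : ℝ)..a, circleSubLogDeriv c w t).im := by
  have hne := exp_ofReal_mul_ofReal_mul_I_ne hw.ne' c
  have hint (u v : ℝ) : IntervalIntegrable (circleSubLogDeriv c w) volume u v :=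
    intervalIntegrable_circleSubLogDeriv fun t _ => hne t
  have hsplit : ∫ t in (0 : ℝ)..a, circleSubLogDeriv c w t =
      -∫ t in a..2 * π / c, circleSubLogDeriv c w t := by
    refine eq_neg_of_add_eq_zero_left ?_
    rw [integral_add_adjacent_intervals (hint _ _) (hint _ _),
      integral_circleSubLogDeriv_period_eq_zero hc.ne' hw]
  have hrest : (∫ t in a..2 * π / c, circleSubLogDeriv c w t).im ≤
      (2 * π / c - a) * (c * (1 / 2)) :=
    im_intervalIntegral_le_mul ha (hint _ _) fun t _ => by
      rw [im_circleSubLogDeriv]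
      exact mul_le_mul_of_nonneg_left (re_div_sub_le_one_half (hne t)
        (by rw [norm_exp_ofReal_mul_ofReal_mul_I]; exact hw.le)) hc.le
  have : (2 * π / c - a) * (c * (1 / 2)) = π - c * a / 2 := by field_simp
  rw [hsplit, neg_im]
  linarith

lemma mul_div_two_sub_pi_le_im_integral_circleSubLogDeriv (hc : 0 < c) {a : ℝ} (ha₀ : 0 ≤ a)
    (ha : a ≤ 2 * π / c) (hne : ∀ t ∈ Icc 0 a, exp (c * t * I) ≠ w) :
    c * a / 2 - π ≤ (∫ t in (0 : ℝ)..a, circleSubLogDeriv c w t).im := by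
  rcases le_or_gt ‖w‖ 1 with hw | hw
  · linarith [mul_div_two_le_im_integral_circleSubLogDeriv_of_norm_le_one hc.le ha₀ hw hne,
      Real.pi_pos]
  · exact mul_div_two_sub_pi_le_im_integral_circleSubLogDeriv_of_one_lt_norm hc ha hw

end Circle

theorem index_b_roots_lower_bound_general
    (b : ℕ) (a : ℝ) (ha0 : 0 < a) (ha1 : a < 1 / b) (ξ : ℂ)
    (hξ : ∀ t ∈ Set.Icc (0 : ℝ) a,
      Complex.exp (2 * Real.pi * Complex.I * (b : ℂ) * (t : ℂ)) ≠ ξ ^ b) :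
    Real.pi * ((b : ℝ) * a - 1) ≤
      (∫ t in (0 : ℝ)..a,
        (2 * Real.pi * (b : ℂ) * Complex.I *
            Complex.exp (2 * Real.pi * Complex.I * (b : ℂ) * (t : ℂ))) /
          (Complex.exp (2 * Real.pi * Complex.I * (b : ℂ) * (t : ℂ)) - ξ ^ b)).im := by
  have hb : (0 : ℝ) < b := one_div_pos.mp (ha0.trans ha1)
  have hexp (t : ℝ) : exp (2 * π * I * b * t) = exp (((2 * π * b : ℝ) : ℂ) * t * I) := by
    push_cast; ring_nf
  have hperiod : a ≤ 2 * π / (2 * π * b) := by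
    rw [show 2 * π / (2 * π * b) = 1 / b by field_simp]
    exact ha1.le
  have key := mul_div_two_sub_pi_le_im_integral_circleSubLogDeriv (w := ξ ^ b)
    (by positivity) ha0.le hperiod fun t ht => hexp t ▸ hξ t ht
  convert key using 3
  · ring
  · ext t
    rw [circleSubLogDeriv, hexp]
    push_cast
    ring

/-- Index bound (5) in the proof of Theorem 3 (Kozma–Oravecz): for an integer `b ≥ 1`
and `0 < a < 1/b`, if `e^{2πibt} ≠ ξ^b` on `[0,a]`, then the change of argument of
`e^{2πibt} - ξ^b` as `t` runs from `0` to `a` is at least `π(ba-1)`. -/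
theorem index_b_roots_lower_bound
    (b : ℕ) (hb : 1 ≤ b) (a : ℝ) (ha0 : 0 < a) (ha1 : a < 1 / b) (ξ : ℂ)
    (hξ : ∀ t ∈ Set.Icc (0 : ℝ) a,
      Complex.exp (2 * Real.pi * Complex.I * (b : ℂ) * (t : ℂ)) ≠ ξ ^ b) :
    Real.pi * ((b : ℝ) * a - 1) ≤
      (∫ t in (0 : ℝ)..a,
        (2 * Real.pi * (b : ℂ) * Complex.I *
            Complex.exp (2 * Real.pi * Complex.I * (b : ℂ) * (t : ℂ))) /
          (Complex.exp (2 * Real.pi * Complex.I * (b : ℂ) * (t : ℂ)) - ξ ^ b)).im :=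
  index_b_roots_lower_bound_general b a ha0 ha1 ξ hξ
end

section
/- Let N ≥ 1 be an integer, let Q be a complex polynomial, let 0 < a < 1, and suppose the function f(t) = Re( exp(2πiNt)·Q(exp(2πit)) ) satisfies f(t) > 0 for every t ∈ [0,a]. Then Q(exp(2πit)) ≠ 0 for every t ∈ [0,a], and the change of continuous argument of Q along the arc, namely ind Q = Im ∫₀^a (2πi·exp(2πit)·Q′(exp(2πit)))/Q(exp(2πit)) dt, satisfies ind Q ≤ π − 2πNa. -/
/-- Necessary condition (3) in the proof of Theorem 3 (Kozma–Oravecz): if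
`f(t) = Re(e^{2πiNt}·Q(e^{2πit}))` is strictly positive on `[0,a]`, then `Q` does not
vanish on the arc and the change of argument of `Q(e^{2πit})` as `t` runs from `0` to
`a` is at most `π - 2πNa`. -/
theorem index_upper_bound_of_pos
    (N : ℕ) (hN : 1 ≤ N) (Q : Polynomial ℂ) (a : ℝ) (ha0 : 0 < a) (ha1 : a < 1)
    (f : ℝ → ℝ)
    (hf : ∀ t : ℝ, f t = (Complex.exp (2 * Real.pi * Complex.I * (N : ℂ) * (t : ℂ)) *
        Q.eval (Complex.exp (2 * Real.pi * Complex.I * (t : ℂ)))).re)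
    (hpos : ∀ t ∈ Set.Icc (0 : ℝ) a, 0 < f t) :
    (∀ t ∈ Set.Icc (0 : ℝ) a,
      Q.eval (Complex.exp (2 * Real.pi * Complex.I * (t : ℂ))) ≠ 0) ∧
    (∫ t in (0 : ℝ)..a,
        (2 * Real.pi * Complex.I * Complex.exp (2 * Real.pi * Complex.I * (t : ℂ)) *
            (Polynomial.derivative Q).eval
              (Complex.exp (2 * Real.pi * Complex.I * (t : ℂ)))) /
          Q.eval (Complex.exp (2 * Real.pi * Complex.I * (t : ℂ)))).im ≤
      Real.pi - 2 * Real.pi * N * a := by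
  set c : ℂ := 2 * Real.pi * Complex.I with hc
  set g : ℝ → ℂ := fun t => Q.eval (Complex.exp (c * t)) with hgdef
  set h : ℝ → ℂ := fun t => Complex.exp (c * N * t) * g t with hhdef
  have hIcc : Set.uIcc (0 : ℝ) a = Set.Icc 0 a := Set.uIcc_of_le ha0.le
  -- positivity of the real part of h
  have hre : ∀ t ∈ Set.Icc (0 : ℝ) a, 0 < (h t).re := by
    intro t ht
    have := hpos t ht
    rw [hf t] at this
    simpa [hhdef, hgdef, hc, mul_assoc] using this
  have hh0 : ∀ t ∈ Set.Icc (0 : ℝ) a, h t ≠ 0 := by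
    intro t ht h0
    have := hre t ht
    rw [h0] at this
    simp at this
  have hg0 : ∀ t ∈ Set.Icc (0 : ℝ) a, g t ≠ 0 := by
    intro t ht h0
    apply hh0 t ht
    simp [hhdef, h0]
  -- derivative facts
  have hE : ∀ (b : ℂ) (t : ℝ), HasDerivAt (fun s : ℝ => Complex.exp (b * s))
      (b * Complex.exp (b * t)) t := by
    intro b t
    have h1 : HasDerivAt (fun z : ℂ => Complex.exp (b * z)) (b * Complex.exp (b * t)) (t : ℂ) := by
      have := ((hasDerivAt_id (t : ℂ)).const_mul b).cexp
      simpa [mul_comm] using this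
    exact h1.comp_ofReal
  have hg' : ∀ t : ℝ, HasDerivAt g
      ((Polynomial.derivative Q).eval (Complex.exp (c * t)) * (c * Complex.exp (c * t))) t := by
    intro t
    exact (Q.hasDerivAt (Complex.exp (c * t))).comp t (hE c t)
  have hh' : ∀ t : ℝ, HasDerivAt h
      ((c * N) * Complex.exp (c * N * t) * g t +
        Complex.exp (c * N * t) *
          ((Polynomial.derivative Q).eval (Complex.exp (c * t)) * (c * Complex.exp (c * t)))) t := by
    intro t
    exact (hE (c * N) t).mul (hg' t)
  set F : ℝ → ℂ := fun t =>
    ((c * N) * Complex.exp (c * N * t) * g t +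
        Complex.exp (c * N * t) *
          ((Polynomial.derivative Q).eval (Complex.exp (c * t)) * (c * Complex.exp (c * t)))) / h t
    with hFdef
  -- continuity
  have hcont_exp : ∀ b : ℂ, Continuous fun t : ℝ => Complex.exp (b * t) := fun b =>
    Complex.continuous_exp.comp (continuous_const.mul Complex.continuous_ofReal)
  have hcont_g : Continuous g := Q.continuous.comp (hcont_exp c)
  have hcont_h : Continuous h := (hcont_exp (c * N)).mul hcont_g
  have hcont_num : Continuous fun t : ℝ =>
      (c * N) * Complex.exp (c * N * t) * g t +
        Complex.exp (c * N * t) *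
          ((Polynomial.derivative Q).eval (Complex.exp (c * t)) * (c * Complex.exp (c * t))) := by
    fun_prop
  have hFint : IntervalIntegrable F MeasureTheory.volume 0 a := by
    apply ContinuousOn.intervalIntegrable
    rw [hIcc]
    exact hcont_num.continuousOn.div hcont_h.continuousOn (fun t ht => hh0 t ht)
  -- FTC for log ∘ h
  have hftc : (∫ t in (0 : ℝ)..a, F t) = Complex.log (h a) - Complex.log (h 0) := by
    apply intervalIntegral.integral_eq_sub_of_hasDerivAt _ hFint
    intro t ht
    rw [hIcc] at ht
    exact (hh' t).clog_real (Complex.mem_slitPlane_iff.2 (Or.inl (hre t ht)))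
  -- relate the target integrand to F
  have hT : ∀ t ∈ Set.uIcc (0 : ℝ) a,
      (c * Complex.exp (c * t) * (Polynomial.derivative Q).eval (Complex.exp (c * t))) / g t
        = F t - c * N := by
    intro t ht
    rw [hIcc] at ht
    have hg := hg0 t ht
    have he : Complex.exp (c * N * t) ≠ 0 := Complex.exp_ne_zero _
    rw [hFdef]
    simp only [hhdef]
    field_simp
    ring
  have hint : (∫ t in (0 : ℝ)..a,
      (c * Complex.exp (c * t) * (Polynomial.derivative Q).eval (Complex.exp (c * t))) / g t)
      = (Complex.log (h a) - Complex.log (h 0)) - a • (c * N) := by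
    rw [intervalIntegral.integral_congr hT, intervalIntegral.integral_sub hFint
      (intervalIntegrable_const), hftc, intervalIntegral.integral_const]
    rw [sub_zero]
  -- argument bounds
  have harg : ∀ t ∈ Set.Icc (0 : ℝ) a, |Complex.arg (h t)| < Real.pi / 2 := by
    intro t ht
    exact Complex.abs_arg_lt_pi_div_two_iff.2 (Or.inl (hre t ht))
  have ha_mem : a ∈ Set.Icc (0 : ℝ) a := Set.mem_Icc.2 ⟨ha0.le, le_refl a⟩
  have h0_mem : (0 : ℝ) ∈ Set.Icc (0 : ℝ) a := Set.mem_Icc.2 ⟨le_refl 0, ha0.le⟩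
  have h1 := abs_lt.1 (harg a ha_mem)
  have h2 := abs_lt.1 (harg 0 h0_mem)
  constructor
  · intro t ht
    exact hg0 t ht
  · rw [hint]
    have him : ((a : ℝ) • (c * N)).im = 2 * Real.pi * N * a := by
      simp [hc, Complex.smul_im, Complex.mul_im]
      ring
    rw [Complex.sub_im, Complex.sub_im, him, Complex.log_im, Complex.log_im]
    have := h1.2
    have := h2.1
    linarith
end
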